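/- arXiv:math/0504256 — 7 statements merged into one kernel-verified Lean document; each statement's English description precedes it below -/
import Mathlib

section
/- Let B → A be a ring homomorphism making A an I-adically complete noetherian B-algebra for an ideal I ⊆ A, and suppose A/I is a finitely generated (B/K)-algebra of finite type where K ⊆ B maps into I. Then the I-adic completion of the module of Kähler differentials Ω¹_{A/B} is a finitely generated A-module. -/
set_option maxHeartbeats 1000000

open Submodule TensorProduct

section Aux

variable {R : Type*} [CommRing R] {M : Type*} [AddCommGroup M] [Module R M] (I : Ideal R)

private lemma aux_smod_mono {f : ℕ → M} (h : ∀ n, f (n + 1) - f n ∈ (I ^ n • ⊤ : Submodule R M))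
    {m n : ℕ} (hmn : m ≤ n) : f m ≡ f n [SMOD (I ^ m • ⊤ : Submodule R M)] := by
  induction n with
  | zero => obtain rfl : m = 0 := Nat.le_zero.mp hmn; rfl
  | succ n ih =>
    rcases eq_or_lt_of_le hmn with rfl | h1
    · rfl
    · have hmn' : m ≤ n := Nat.lt_succ_iff.mp h1
      have hmem : f (n + 1) - f n ∈ (I ^ m • ⊤ : Submodule R M) :=
        Submodule.smul_mono_left (Ideal.pow_le_pow_right hmn') (h n)
      exact (ih hmn').trans (SModEq.sub_mem.mpr (by simpa [neg_sub] using neg_mem hmem))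

/-- If the images of finitely many elements of `M` generate `M` modulo `I • M`, and `R` is
`I`-adically complete, then the adic completion of `M` is a finite `R`-module. -/
theorem finite_adicCompletion_of_span_sup [IsAdicComplete I R] {k : ℕ} (x : Fin k → M)
    (hx : span R (Set.range x) ⊔ (I • ⊤ : Submodule R M) = ⊤) :
    Module.Finite R (AdicCompletion I M) := by
  classical
  set F : (Fin k → R) →ₗ[R] M := Fintype.linearCombination R x with hF
  have hx' : LinearMap.range F ⊔ (I • ⊤ : Submodule R M) = ⊤ := by
    rw [hF, Fintype.range_linearCombination]; exact hx
  have key : ∀ (n : ℕ) (m : M), m ∈ (I ^ n • ⊤ : Submodule R M) →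
      ∃ c : Fin k → R, (∀ i, c i ∈ I ^ n) ∧ m - F c ∈ (I ^ (n + 1) • ⊤ : Submodule R M) := by
    intro n m hm
    have h1 : (I ^ n • ⊤ : Submodule R M) =
        I ^ n • LinearMap.range F ⊔ (I ^ (n + 1) • ⊤ : Submodule R M) := by
      conv_lhs => rw [← hx']
      rw [Submodule.smul_sup, ← Submodule.smul_assoc, smul_eq_mul, ← pow_succ]
    rw [h1] at hm
    obtain ⟨u, hu, v, hv, rfl⟩ := Submodule.mem_sup.mp hm
    have hu' : ∃ c : Fin k → R, (∀ i, c i ∈ I ^ n) ∧ F c = u := by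
      refine Submodule.smul_induction_on hu ?_ ?_
      · rintro r hr m ⟨c, rfl⟩
        exact ⟨r • c, fun i ↦ Ideal.mul_mem_right _ _ hr, map_smul F r c⟩
      · rintro m1 m2 ⟨c1, hc1, rfl⟩ ⟨c2, hc2, rfl⟩
        exact ⟨c1 + c2, fun i ↦ add_mem (hc1 i) (hc2 i), map_add F c1 c2⟩
    obtain ⟨c, hc, rfl⟩ := hu'
    exact ⟨c, hc, by simpa using hv⟩
  have hFmem : ∀ (n : ℕ) (c : Fin k → R), (∀ i, c i ∈ I ^ n) →
      F c ∈ (I ^ n • ⊤ : Submodule R M) := by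
    intro n c hc
    rw [hF, Fintype.linearCombination_apply]
    exact sum_mem (fun i _ ↦ Submodule.smul_mem_smul (hc i) mem_top)
  refine Module.Finite.of_surjective
    (Fintype.linearCombination R fun i ↦ AdicCompletion.of I M (x i)) ?_
  intro z
  obtain ⟨s, rfl⟩ : ∃ s, AdicCompletion.mk I M s = z :=
    AdicCompletion.induction_on I M z
      (p := fun w ↦ ∃ s, AdicCompletion.mk I M s = w) (fun s ↦ ⟨s, rfl⟩)
  have step : ∀ (n : ℕ) (c : Fin k → R), s n - F c ∈ (I ^ n • ⊤ : Submodule R M) →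
      ∃ c' : Fin k → R, (∀ i, c' i - c i ∈ I ^ n) ∧
        s (n + 1) - F c' ∈ (I ^ (n + 1) • ⊤ : Submodule R M) := by
    intro n c hc
    have h3 : s (n + 1) - s n ∈ (I ^ n • ⊤ : Submodule R M) := by
      have := s.property (Nat.le_succ n)
      simpa [neg_sub] using neg_mem (SModEq.sub_mem.mp this)
    have h2 : s (n + 1) - F c ∈ (I ^ n • ⊤ : Submodule R M) := by
      have := add_mem h3 hc
      simpa [sub_add_sub_cancel] using this
    obtain ⟨d, hd, hd2⟩ := key n _ h2
    refine ⟨c + d, fun i ↦ by simpa using hd i, ?_⟩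
    rw [map_add, ← sub_sub]
    exact hd2
  choose next hnext1 hnext2 using step
  let cseq : ∀ n : ℕ, {c : Fin k → R // s n - F c ∈ (I ^ n • ⊤ : Submodule R M)} :=
    fun n ↦ Nat.rec ⟨0, by simp⟩ (fun n p ↦ ⟨next n p.1 p.2, hnext2 n p.1 p.2⟩) n
  have hdiff : ∀ n i, (cseq (n + 1)).1 i - (cseq n).1 i ∈ I ^ n := by
    intro n i
    exact hnext1 n (cseq n).1 (cseq n).2 i
  have hcauchy : ∀ i, ∃ L : R, ∀ n, (cseq n).1 i ≡ L [SMOD (I ^ n • ⊤ : Submodule R R)] := by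
    intro i
    refine IsPrecomplete.prec (IsAdicComplete.toIsPrecomplete (I := I)) ?_
    intro m n hmn
    refine aux_smod_mono I (f := fun n ↦ (cseq n).1 i) (fun n ↦ ?_) hmn
    have : (I ^ n • ⊤ : Submodule R R) = I ^ n := by
      rw [smul_eq_mul, Ideal.mul_top]
    rw [this]
    exact hdiff n i
  choose a ha using hcauchy
  refine ⟨a, ?_⟩
  refine AdicCompletion.ext (fun n ↦ ?_)
  have lhs : (Fintype.linearCombination R (fun i ↦ AdicCompletion.of I M (x i)) a).val n
      = Submodule.mkQ (I ^ n • ⊤ : Submodule R M) (F a) := by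
    rw [← AdicCompletion.eval_apply, Fintype.linearCombination_apply, map_sum]
    simp only [map_smul, AdicCompletion.eval_of]
    rw [hF, Fintype.linearCombination_apply, map_sum]
    simp only [map_smul]
  rw [lhs]
  show _ = (AdicCompletion.mk I M s).val n
  rw [AdicCompletion.mk_apply_coe, Submodule.mkQ_apply, Submodule.mkQ_apply,
    Submodule.Quotient.eq]
  have hmem1 : s n - F (cseq n).1 ∈ (I ^ n • ⊤ : Submodule R M) := (cseq n).2
  have hmem2 : F ((cseq n).1 - a) ∈ (I ^ n • ⊤ : Submodule R M) := by
    refine hFmem n _ (fun i ↦ ?_)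
    have : (cseq n).1 i - a i ∈ I ^ n := by
      have := SModEq.sub_mem.mp (ha i n)
      rwa [smul_eq_mul, Ideal.mul_top] at this
    simpa using this
  have := add_mem hmem1 hmem2
  rw [map_sub] at this
  have h4 : s n - F (cseq n).1 + (F (cseq n).1 - F a) = s n - F a := by abel
  rw [h4] at this
  simpa [neg_sub] using neg_mem this

/-- Lift generators of `M ⧸ I • M`. -/
theorem exists_span_sup_of_finite_quotient
    [Module.Finite R (M ⧸ (I • ⊤ : Submodule R M))] :
    ∃ (k : ℕ) (x : Fin k → M), span R (Set.range x) ⊔ (I • ⊤ : Submodule R M) = ⊤ := by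
  obtain ⟨k, y, hy⟩ := Module.Finite.exists_fin (R := R) (M := M ⧸ (I • ⊤ : Submodule R M))
  choose x hxy using fun i ↦ Submodule.mkQ_surjective (I • ⊤ : Submodule R M) (y i)
  refine ⟨k, x, ?_⟩
  rw [eq_top_iff]
  intro m _
  have h1 : Submodule.mkQ (I • ⊤ : Submodule R M) m ∈
      Submodule.map (Submodule.mkQ (I • ⊤ : Submodule R M)) (span R (Set.range x)) := by
    rw [Submodule.map_span, ← Set.range_comp]
    have : (Submodule.mkQ (I • ⊤ : Submodule R M)) ∘ x = y := funext hxy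
    rw [this, hy]
    exact mem_top
  obtain ⟨z, hz, hzm⟩ := h1
  have h2 : m - z ∈ (I • ⊤ : Submodule R M) := by
    rw [← Submodule.Quotient.eq]
    exact hzm.symm
  exact Submodule.mem_sup.mpr ⟨z, hz, m - z, h2, by abel⟩

end Aux

/-- Let `B → A` be a ring homomorphism making `A` an `I`-adically complete noetherian
`B`-algebra, `K ⊆ B` an ideal mapping into `I`, and suppose the induced map
`B/K → A/I` is of finite type. Then the `I`-adic completion of the module of Kähler
differentials `Ω¹_{A/B}` is a finitely generated `A`-module. -/
theorem adicCompletion_kaehlerDifferential_finite (A B : Type*) [CommRing A] [CommRing B]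
    [Algebra B A] [IsNoetherianRing A] (I : Ideal A) (K : Ideal B) [IsAdicComplete I A]
    (hK : K ≤ I.comap (algebraMap B A))
    (hft : @Algebra.FiniteType (B ⧸ K) (A ⧸ I) _ _ (Ideal.Quotient.algebraQuotientOfLEComap hK)) :
    Module.Finite A (AdicCompletion I (KaehlerDifferential B A)) := by
  classical
  -- `A ⧸ I` is of finite type over `B`
  letI alg : Algebra (B ⧸ K) (A ⧸ I) := Ideal.Quotient.algebraQuotientOfLEComap hK
  haveI tower : IsScalarTower B (B ⧸ K) (A ⧸ I) := by
    refine IsScalarTower.of_algebraMap_eq (fun b ↦ ?_)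
    show algebraMap B (A ⧸ I) b
      = Ideal.quotientMap I (algebraMap B A) hK (Ideal.Quotient.mk K b)
    rw [Ideal.quotientMap_mk, Ideal.Quotient.mk_algebraMap]
  haveI ft1 : Algebra.FiniteType B (B ⧸ K) :=
    Algebra.FiniteType.of_surjective (Ideal.Quotient.mkₐ B K)
      (Ideal.Quotient.mkₐ_surjective B K)
  haveI ft2 : Algebra.FiniteType B (A ⧸ I) := Algebra.FiniteType.trans ft1 hft
  haveI : Module.Finite (A ⧸ I) (KaehlerDifferential B (A ⧸ I)) :=
    KaehlerDifferential.finite B (A ⧸ I)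
  -- the tensor product `(A ⧸ I) ⊗[A] Ω[A⁄B]` is finite over `A ⧸ I`
  have hsurj : Function.Surjective (algebraMap A (A ⧸ I)) := Ideal.Quotient.mk_surjective
  set g := KaehlerDifferential.mapBaseChange B A (A ⧸ I) with hg
  have hgsurj : Function.Surjective g := KaehlerDifferential.mapBaseChange_surjective B A _ hsurj
  have hker : LinearMap.range (KaehlerDifferential.kerCotangentToTensor B A (A ⧸ I)) =
      (LinearMap.ker g).restrictScalars A :=
    KaehlerDifferential.range_kerCotangentToTensor B A _ hsurj
  haveI : Module.Finite A ↥(RingHom.ker (algebraMap A (A ⧸ I))) :=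
    ⟨(Submodule.fg_top _).mpr (IsNoetherian.noetherian _)⟩
  haveI : Module.Finite A (RingHom.ker (algebraMap A (A ⧸ I))).Cotangent :=
    Module.Finite.of_surjective (Ideal.toCotangent _) (Ideal.toCotangent_surjective _)
  have hkerfgA : ((LinearMap.ker g).restrictScalars A).FG := by
    rw [← hker, ← Submodule.map_top]
    exact Submodule.FG.map _ (Module.finite_def.mp inferInstance)
  have hkerfg : (LinearMap.ker g).FG := by
    obtain ⟨t, ht⟩ := hkerfgA
    have hts : (t : Set ((A ⧸ I) ⊗[A] KaehlerDifferential B A)) ⊆ LinearMap.ker g := by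
      intro v hv
      have : v ∈ span A (t : Set _) := Submodule.subset_span hv
      rw [ht] at this
      exact this
    refine ⟨t, le_antisymm (Submodule.span_le.mpr hts) (fun v hv ↦ ?_)⟩
    have hv' : v ∈ span A (t : Set _) := by rw [ht]; exact hv
    refine Submodule.span_induction (fun y hy ↦ Submodule.subset_span hy)
      (Submodule.zero_mem _) (fun y z _ _ hy hz ↦ Submodule.add_mem _ hy hz)
      (fun r y _ hy ↦ ?_) hv'
    rw [← algebraMap_smul (A ⧸ I) r y]
    exact Submodule.smul_mem _ _ hy
  haveI hfinT : Module.Finite (A ⧸ I) ((A ⧸ I) ⊗[A] KaehlerDifferential B A) := by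
    rw [Module.finite_def]
    refine Submodule.fg_of_fg_map_of_fg_inf_ker g ?_ ?_
    · rw [Submodule.map_top, LinearMap.range_eq_top.mpr hgsurj]
      exact Module.finite_def.mp inferInstance
    · rw [top_inf_eq]
      exact hkerfg
  haveI : Module.Finite A (A ⧸ I) :=
    Module.Finite.of_surjective (Algebra.linearMap A (A ⧸ I)) hsurj
  haveI hfinTA : Module.Finite A ((A ⧸ I) ⊗[A] KaehlerDifferential B A) :=
    Module.Finite.trans (A ⧸ I) ((A ⧸ I) ⊗[A] KaehlerDifferential B A)
  haveI : Module.Finite A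
      (KaehlerDifferential B A ⧸ (I • ⊤ : Submodule A (KaehlerDifferential B A))) :=
    Module.Finite.equiv (TensorProduct.quotTensorEquivQuotSMul (KaehlerDifferential B A) I)
  obtain ⟨k, x, hx⟩ := exists_span_sup_of_finite_quotient (R := A)
    (M := KaehlerDifferential B A) I
  exact finite_adicCompletion_of_span_sup I x hx
end

section
/- Let B → A be a continuous homomorphism of preadic rings with ideals of definition K ⊆ B, J ⊆ A satisfying K·A ⊆ J, and set A_n = A/J^{n+1}, B_n = B/K^{n+1}. Then the J-adic completion of Ω¹_{A/B} is canonically isomorphic to the inverse limit lim_n Ω¹_{A_n/B_n}, compatibly with the canonical derivations. -/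
set_option maxHeartbeats 800000
set_option synthInstance.maxHeartbeats 400000


/-- The canonical algebra structure `B/K^(n+1) → A/J^(n+1)` induced by a continuous
homomorphism of preadic rings `B → A` (i.e. one with `K·A ⊆ J`). -/
noncomputable def quotPowAlgebra {A B : Type*} [CommRing A] [CommRing B] [Algebra B A]
    (K : Ideal B) (J : Ideal A) (h : K ≤ J.comap (algebraMap B A)) (n : ℕ) :
    Algebra (B ⧸ K ^ (n + 1)) (A ⧸ J ^ (n + 1)) :=
  Ideal.Quotient.algebraQuotientOfLEComap (by
    rw [← Ideal.map_le_iff_le_comap, Ideal.map_pow]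
    exact Ideal.pow_right_mono (Ideal.map_le_iff_le_comap.mpr h) _)

namespace AKL

/-- abbreviation for the components of the adic completion -/
abbrev low {A : Type*} (B : Type*) [CommRing A] [CommRing B] [Algebra B A]
    (J : Ideal A) (n : ℕ) : Type _ :=
  KaehlerDifferential B A ⧸ (J ^ n • ⊤ : Submodule A (KaehlerDifferential B A))

variable {A B : Type*} [CommRing A] [CommRing B] [Algebra B A]
variable (K : Ideal B) (J : Ideal A) (h : K ≤ J.comap (algebraMap B A))

/-- abbreviation for the level-n Kaehler differential module -/
abbrev Ωq (n : ℕ) : Type _ :=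
  @KaehlerDifferential (B ⧸ K ^ (n + 1)) (A ⧸ J ^ (n + 1)) _ _ (quotPowAlgebra K J h n)


lemma towerBBnAn (n : ℕ) :
    letI := quotPowAlgebra K J h n
    IsScalarTower B (B ⧸ K ^ (n + 1)) (A ⧸ J ^ (n + 1)) := by
  letI := quotPowAlgebra K J h n
  exact IsScalarTower.of_algebraMap_eq fun b => rfl

lemma smulCommBnAAn (n : ℕ) :
    letI := quotPowAlgebra K J h n
    SMulCommClass (B ⧸ K ^ (n + 1)) A (A ⧸ J ^ (n + 1)) := by
  letI := quotPowAlgebra K J h n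
  constructor
  intro s a x
  rw [Algebra.smul_def, Algebra.smul_def, Algebra.smul_def, Algebra.smul_def]
  ring

/-- The canonical `A`-linear map `Ω[A⁄B] → Ω[A_n⁄B_n]`. -/
noncomputable def toQuot (n : ℕ) :
    letI := quotPowAlgebra K J h n
    haveI := smulCommBnAAn K J h n
    KaehlerDifferential B A →ₗ[A] Ωq K J h n :=
  letI := quotPowAlgebra K J h n
  haveI := towerBBnAn K J h n
  haveI := smulCommBnAAn K J h n
  KaehlerDifferential.map B (B ⧸ K ^ (n + 1)) A (A ⧸ J ^ (n + 1))

lemma toQuot_D (n : ℕ) (a : A) :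
    toQuot K J h n (KaehlerDifferential.D B A a) =
      @KaehlerDifferential.D _ _ _ _ (quotPowAlgebra K J h n) (Ideal.Quotient.mk _ a) := by
  letI := quotPowAlgebra K J h n
  haveI := towerBBnAn K J h n
  haveI := smulCommBnAAn K J h n
  exact KaehlerDifferential.map_D B (B ⧸ K ^ (n + 1)) A (A ⧸ J ^ (n + 1)) a

lemma smul_eq_mk_smul (n : ℕ) (a : A) (ω : Ωq K J h n) :
    letI := quotPowAlgebra K J h n
    haveI := smulCommBnAAn K J h n
    a • ω = Ideal.Quotient.mk (J ^ (n + 1)) a • ω := by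
  letI := quotPowAlgebra K J h n
  haveI := smulCommBnAAn K J h n
  exact (algebraMap_smul (A ⧸ J ^ (n + 1)) a ω).symm

/-- `D` maps `J^(n+1)` into `J^n • Ω`. -/
lemma D_pow_mem (n : ℕ) :
    ∀ x ∈ J ^ (n + 1), KaehlerDifferential.D B A x ∈
      (J ^ n • ⊤ : Submodule A (KaehlerDifferential B A)) := by
  induction n with
  | zero => intro x _; simp
  | succ n ih =>
    intro x hx
    rw [pow_succ] at hx
    refine Submodule.mul_induction_on hx (fun a ha b hb => ?_) (fun x y hx' hy' => ?_)
    · rw [Derivation.leibniz]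
      refine Submodule.add_mem _ ?_ ?_
      · exact Submodule.smul_mem_smul ha Submodule.mem_top
      · have := ih a ha
        rw [pow_succ, mul_comm (J ^ n) J, mul_smul]
        exact Submodule.smul_mem_smul hb this
    · rw [map_add]; exact Submodule.add_mem _ hx' hy'

lemma torsionLow (n : ℕ) :
    Module.IsTorsionBySet A (low B J n) (J ^ (n + 1) : Ideal A) := by
  intro x r
  obtain ⟨m, rfl⟩ := Submodule.Quotient.mk_surjective _ x
  rw [← Submodule.Quotient.mk_smul, Submodule.Quotient.mk_eq_zero]
  exact Submodule.smul_mem_smul (Ideal.pow_le_pow_right n.le_succ r.2) Submodule.mem_top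

noncomputable def modAnLow (n : ℕ) : Module (A ⧸ J ^ (n + 1)) (low B J n) :=
  (torsionLow (B := B) J n).module

lemma mk_smul_low (n : ℕ) (a : A) (x : low B J n) :
    letI := modAnLow (B := B) J n
    Ideal.Quotient.mk (J ^ (n + 1)) a • x = a • x := rfl

noncomputable def modBnLow (n : ℕ) :
    Module (B ⧸ K ^ (n + 1)) (low B J n) :=
  letI := quotPowAlgebra K J h n
  letI := modAnLow (B := B) J n
  Module.compHom (low B J n) (algebraMap (B ⧸ K ^ (n + 1)) (A ⧸ J ^ (n + 1)))

lemma towerBnAnLow (n : ℕ) :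
    letI := quotPowAlgebra K J h n
    letI := modAnLow (B := B) J n
    letI := modBnLow K J h n
    IsScalarTower (B ⧸ K ^ (n + 1)) (A ⧸ J ^ (n + 1)) (low B J n) := by
  letI := quotPowAlgebra K J h n
  letI := modAnLow (B := B) J n
  letI := modBnLow K J h n
  constructor
  intro r a x
  show (r • a) • x = (algebraMap (B ⧸ K ^ (n + 1)) (A ⧸ J ^ (n + 1)) r) • (a • x)
  rw [Algebra.smul_def, mul_smul]

/-- The function underlying the canonical derivation `A_n → Ω ⧸ Jⁿ•Ω`. -/
noncomputable def DlowFun (n : ℕ) : (A ⧸ J ^ (n + 1)) → low B J n := fun x =>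
  Quotient.liftOn' x
    (fun a => Submodule.Quotient.mk (KaehlerDifferential.D B A a))
    (by
      intro a b hab
      have hmem : a - b ∈ (J ^ (n + 1) : Ideal A) :=
        (Submodule.quotientRel_def _).mp hab
      refine (Submodule.Quotient.eq _).mpr ?_
      rw [← map_sub]
      exact D_pow_mem J n _ hmem)

lemma DlowFun_mk (n : ℕ) (a : A) :
    DlowFun J n (Ideal.Quotient.mk (J ^ (n + 1)) a) =
      Submodule.Quotient.mk (KaehlerDifferential.D B A a) := rfl

/-- The canonical derivation `A_n → Ω ⧸ Jⁿ•Ω` over `B_n`. -/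
noncomputable def Dlow (n : ℕ) :
    letI := quotPowAlgebra K J h n
    letI := modAnLow (B := B) J n
    letI := modBnLow K J h n
    Derivation (B ⧸ K ^ (n + 1)) (A ⧸ J ^ (n + 1)) (low B J n) :=
  letI := quotPowAlgebra K J h n
  letI := modAnLow (B := B) J n
  letI := modBnLow K J h n
  { toFun := DlowFun J n
    map_add' := by
      intro x y
      obtain ⟨a, rfl⟩ := Ideal.Quotient.mk_surjective x
      obtain ⟨b, rfl⟩ := Ideal.Quotient.mk_surjective y
      rw [← map_add, DlowFun_mk, DlowFun_mk, DlowFun_mk, ← Submodule.Quotient.mk_add, map_add]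
    map_smul' := by
      intro r x
      obtain ⟨b, rfl⟩ := Ideal.Quotient.mk_surjective r
      obtain ⟨a, rfl⟩ := Ideal.Quotient.mk_surjective x
      have h1 : (Ideal.Quotient.mk (K ^ (n + 1)) b) • (Ideal.Quotient.mk (J ^ (n + 1)) a) =
          Ideal.Quotient.mk (J ^ (n + 1)) (algebraMap B A b * a) := by
        rw [Algebra.smul_def]; rfl
      show DlowFun J n ((Ideal.Quotient.mk (K ^ (n + 1)) b) • (Ideal.Quotient.mk (J ^ (n + 1)) a)) =
        (Ideal.Quotient.mk (K ^ (n + 1)) b) • DlowFun J n (Ideal.Quotient.mk (J ^ (n + 1)) a)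
      rw [h1, DlowFun_mk, DlowFun_mk]
      have h2 : KaehlerDifferential.D B A (algebraMap B A b * a) =
          algebraMap B A b • KaehlerDifferential.D B A a := by
        rw [Derivation.leibniz, Derivation.map_algebraMap, smul_zero, add_zero]
      rw [h2]
      show Submodule.Quotient.mk (algebraMap B A b • KaehlerDifferential.D B A a) =
        (algebraMap (B ⧸ K ^ (n + 1)) (A ⧸ J ^ (n + 1)) (Ideal.Quotient.mk (K ^ (n + 1)) b)) •
          Submodule.Quotient.mk (p := (J ^ n • ⊤ : Submodule A (KaehlerDifferential B A)))
            (KaehlerDifferential.D B A a)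
      rw [Submodule.Quotient.mk_smul]
      rfl
    map_one_eq_zero' := by
      show DlowFun J n (Ideal.Quotient.mk (J ^ (n + 1)) 1) = 0
      rw [DlowFun_mk, Derivation.map_one_eq_zero, Submodule.Quotient.mk_zero]
    leibniz' := by
      intro x y
      obtain ⟨a, rfl⟩ := Ideal.Quotient.mk_surjective x
      obtain ⟨b, rfl⟩ := Ideal.Quotient.mk_surjective y
      show DlowFun J n (Ideal.Quotient.mk _ (a * b)) =
        Ideal.Quotient.mk (J ^ (n + 1)) a • DlowFun J n (Ideal.Quotient.mk _ b) +
        Ideal.Quotient.mk (J ^ (n + 1)) b • DlowFun J n (Ideal.Quotient.mk _ a)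
      rw [DlowFun_mk, DlowFun_mk, DlowFun_mk, Derivation.leibniz,
        mk_smul_low, mk_smul_low, ← Submodule.Quotient.mk_smul, ← Submodule.Quotient.mk_smul,
        ← Submodule.Quotient.mk_add] }

lemma Dlow_mk (n : ℕ) (a : A) :
    letI := quotPowAlgebra K J h n
    letI := modAnLow (B := B) J n
    letI := modBnLow K J h n
    Dlow K J h n (Ideal.Quotient.mk (J ^ (n + 1)) a) =
      Submodule.Quotient.mk (KaehlerDifferential.D B A a) := rfl

/-- `Ω[A_n⁄B_n] → Ω ⧸ Jⁿ•Ω`, lifting the derivation `Dlow`. -/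
noncomputable def ψ (n : ℕ) :
    letI := quotPowAlgebra K J h n
    letI := modAnLow (B := B) J n
    Ωq K J h n →ₗ[A ⧸ J ^ (n + 1)] low B J n :=
  letI := quotPowAlgebra K J h n
  letI := modAnLow (B := B) J n
  letI := modBnLow K J h n
  haveI := towerBnAnLow K J h n
  (Dlow K J h n).liftKaehlerDifferential

lemma ψ_D (n : ℕ) (a : A) :
    letI := quotPowAlgebra K J h n
    letI := modAnLow (B := B) J n
    ψ K J h n (@KaehlerDifferential.D _ _ _ _ (quotPowAlgebra K J h n)
        (Ideal.Quotient.mk (J ^ (n + 1)) a)) =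
      Submodule.Quotient.mk (KaehlerDifferential.D B A a) := by
  letI := quotPowAlgebra K J h n
  letI := modAnLow (B := B) J n
  letI := modBnLow K J h n
  haveI := towerBnAnLow K J h n
  exact (Dlow K J h n).liftKaehlerDifferential_comp_D _

/-- The factor map `A_m → A_n`. -/
noncomputable def factorA (m n : ℕ) (hnm : n ≤ m) : (A ⧸ J ^ (m + 1)) →+* (A ⧸ J ^ (n + 1)) :=
  Ideal.Quotient.factor (Ideal.pow_le_pow_right (Nat.succ_le_succ hnm))

/-- The factor map `B_m → B_n`. -/
noncomputable def factorB (m n : ℕ) (hnm : n ≤ m) : (B ⧸ K ^ (m + 1)) →+* (B ⧸ K ^ (n + 1)) :=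
  Ideal.Quotient.factor (Ideal.pow_le_pow_right (Nat.succ_le_succ hnm))

lemma factorA_algebraMap (m n : ℕ) (hnm : n ≤ m) (r : B ⧸ K ^ (m + 1)) :
    letI := quotPowAlgebra K J h m
    letI := quotPowAlgebra K J h n
    factorA J m n hnm (algebraMap (B ⧸ K ^ (m + 1)) (A ⧸ J ^ (m + 1)) r) =
      algebraMap (B ⧸ K ^ (n + 1)) (A ⧸ J ^ (n + 1)) (factorB K m n hnm r) := by
  obtain ⟨b, rfl⟩ := Ideal.Quotient.mk_surjective r
  letI := quotPowAlgebra K J h m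
  letI := quotPowAlgebra K J h n
  show factorA J m n hnm (Ideal.Quotient.mk _ (algebraMap B A b)) = _
  rw [factorA, Ideal.Quotient.factor_mk, factorB, Ideal.Quotient.factor_mk]
  rfl

noncomputable def modAmΩq (m n : ℕ) (hnm : n ≤ m) :
    Module (A ⧸ J ^ (m + 1)) (Ωq K J h n) :=
  letI := quotPowAlgebra K J h n
  Module.compHom (Ωq K J h n) (factorA J m n hnm)

noncomputable def modBmΩq (m n : ℕ) (hnm : n ≤ m) :
    Module (B ⧸ K ^ (m + 1)) (Ωq K J h n) :=
  letI := quotPowAlgebra K J h n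
  Module.compHom (Ωq K J h n)
    ((algebraMap (B ⧸ K ^ (n + 1)) (A ⧸ J ^ (n + 1))).comp (factorB K m n hnm))

lemma towerBmAmΩq (m n : ℕ) (hnm : n ≤ m) :
    letI := quotPowAlgebra K J h m
    letI := quotPowAlgebra K J h n
    letI := modAmΩq K J h m n hnm
    letI := modBmΩq K J h m n hnm
    IsScalarTower (B ⧸ K ^ (m + 1)) (A ⧸ J ^ (m + 1)) (Ωq K J h n) := by
  letI := quotPowAlgebra K J h m
  letI := quotPowAlgebra K J h n
  letI := modAmΩq K J h m n hnm
  letI := modBmΩq K J h m n hnm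
  constructor
  intro r a x
  show (factorA J m n hnm (r • a)) • x =
    ((algebraMap (B ⧸ K ^ (n + 1)) (A ⧸ J ^ (n + 1))) (factorB K m n hnm r)) •
      (factorA J m n hnm a) • x
  rw [Algebra.smul_def, map_mul, factorA_algebraMap K J h m n hnm r, mul_smul]

/-- The canonical derivation `A_m → Ω[A_n⁄B_n]` over `B_m`, for `n ≤ m`. -/
noncomputable def DT (m n : ℕ) (hnm : n ≤ m) :
    letI := quotPowAlgebra K J h m
    letI := modAmΩq K J h m n hnm
    letI := modBmΩq K J h m n hnm
    Derivation (B ⧸ K ^ (m + 1)) (A ⧸ J ^ (m + 1)) (Ωq K J h n) :=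
  letI := quotPowAlgebra K J h m
  letI := quotPowAlgebra K J h n
  letI := modAmΩq K J h m n hnm
  letI := modBmΩq K J h m n hnm
  { toFun := fun x => KaehlerDifferential.D _ _ (factorA J m n hnm x)
    map_add' := by
      intro x y
      show KaehlerDifferential.D _ _ (factorA J m n hnm (x + y)) =
        KaehlerDifferential.D _ _ (factorA J m n hnm x) +
          KaehlerDifferential.D _ _ (factorA J m n hnm y)
      rw [map_add, map_add]
    map_smul' := by
      intro r x
      show KaehlerDifferential.D _ _ (factorA J m n hnm (r • x)) =
        r • KaehlerDifferential.D _ _ (factorA J m n hnm x)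
      rw [Algebra.smul_def, map_mul, factorA_algebraMap K J h m n hnm r,
        Derivation.leibniz, Derivation.map_algebraMap, smul_zero, add_zero]
      rfl
    map_one_eq_zero' := by
      show KaehlerDifferential.D _ _ (factorA J m n hnm 1) = 0
      rw [map_one, Derivation.map_one_eq_zero]
    leibniz' := by
      intro a b
      show KaehlerDifferential.D _ _ (factorA J m n hnm (a * b)) =
        a • KaehlerDifferential.D _ _ (factorA J m n hnm b) +
        b • KaehlerDifferential.D _ _ (factorA J m n hnm a)
      rw [map_mul, Derivation.leibniz]
      rfl }

/-- The transition maps between the levels. -/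
noncomputable def Tlin (m n : ℕ) (hnm : n ≤ m) :
    letI := quotPowAlgebra K J h m
    letI := modAmΩq K J h m n hnm
    Ωq K J h m →ₗ[A ⧸ J ^ (m + 1)] Ωq K J h n :=
  letI := quotPowAlgebra K J h m
  letI := quotPowAlgebra K J h n
  letI := modAmΩq K J h m n hnm
  letI := modBmΩq K J h m n hnm
  haveI := towerBmAmΩq K J h m n hnm
  (DT K J h m n hnm).liftKaehlerDifferential

lemma Tlin_D (m n : ℕ) (hnm : n ≤ m) (a : A) :
    Tlin K J h m n hnm
        (@KaehlerDifferential.D _ _ _ _ (quotPowAlgebra K J h m)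
          (Ideal.Quotient.mk (J ^ (m + 1)) a)) =
      @KaehlerDifferential.D _ _ _ _ (quotPowAlgebra K J h n)
        (Ideal.Quotient.mk (J ^ (n + 1)) a) := by
  letI := quotPowAlgebra K J h m
  letI := quotPowAlgebra K J h n
  letI := modAmΩq K J h m n hnm
  letI := modBmΩq K J h m n hnm
  haveI := towerBmAmΩq K J h m n hnm
  have := (DT K J h m n hnm).liftKaehlerDifferential_comp_D
    (Ideal.Quotient.mk (J ^ (m + 1)) a)
  refine this.trans ?_
  show KaehlerDifferential.D _ _ (factorA J m n hnm (Ideal.Quotient.mk (J ^ (m + 1)) a)) = _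
  rw [factorA, Ideal.Quotient.factor_mk]

lemma Tlin_smul (m n : ℕ) (hnm : n ≤ m) (x : A ⧸ J ^ (m + 1)) (ω : Ωq K J h m) :
    letI := quotPowAlgebra K J h m
    letI := quotPowAlgebra K J h n
    Tlin K J h m n hnm (x • ω) = factorA J m n hnm x • Tlin K J h m n hnm ω := by
  letI := quotPowAlgebra K J h m
  letI := quotPowAlgebra K J h n
  letI := modAmΩq K J h m n hnm
  letI := modBmΩq K J h m n hnm
  haveI := towerBmAmΩq K J h m n hnm
  exact (Tlin K J h m n hnm).map_smul x ω

/-- The map `Ω ⧸ J^(n+1)•Ω → Ω[A_n⁄B_n]`. -/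
noncomputable def φ (n : ℕ) :
    letI := quotPowAlgebra K J h n
    haveI := smulCommBnAAn K J h n
    low B J (n + 1) →ₗ[A] Ωq K J h n :=
  letI := quotPowAlgebra K J h n
  haveI := smulCommBnAAn K J h n
  Submodule.liftQ _ (toQuot K J h n) (by
    rw [Submodule.smul_le]
    intro r hr x _
    rw [LinearMap.mem_ker, map_smul, smul_eq_mk_smul,
      Ideal.Quotient.eq_zero_iff_mem.mpr hr, zero_smul])

lemma φ_mk (n : ℕ) (x : KaehlerDifferential B A) :
    φ K J h n (Submodule.Quotient.mk x) = toQuot K J h n x := rfl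

lemma toQuot_surjective (n : ℕ) : Function.Surjective (toQuot K J h n) := by
  letI := quotPowAlgebra K J h n
  haveI := towerBBnAn K J h n
  haveI := smulCommBnAAn K J h n
  exact KaehlerDifferential.map_surjective_of_surjective B (B ⧸ K ^ (n + 1)) A (A ⧸ J ^ (n + 1))
    Ideal.Quotient.mk_surjective

lemma Tlin_toQuot (m n : ℕ) (hnm : n ≤ m) (x : KaehlerDifferential B A) :
    Tlin K J h m n hnm (toQuot K J h m x) = toQuot K J h n x := by
  letI := quotPowAlgebra K J h m
  letI := quotPowAlgebra K J h n
  haveI := smulCommBnAAn K J h m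
  haveI := smulCommBnAAn K J h n
  have hx : x ∈ Submodule.span A (Set.range (KaehlerDifferential.D B A)) := by
    rw [KaehlerDifferential.span_range_derivation]; trivial
  induction hx using Submodule.span_induction with
  | mem x hx =>
    obtain ⟨a, rfl⟩ := hx
    rw [toQuot_D, toQuot_D, Tlin_D]
  | zero => rw [map_zero, map_zero, map_zero]
  | add x y hx hy ihx ihy => rw [map_add, map_add, map_add, ihx, ihy]
  | smul a x hx ih =>
    rw [(toQuot K J h m).map_smul, (toQuot K J h n).map_smul,
      smul_eq_mk_smul K J h m a (toQuot K J h m x),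
      smul_eq_mk_smul K J h n a (toQuot K J h n x),
      Tlin_smul, ih, factorA, Ideal.Quotient.factor_mk]

lemma ψ_toQuot (n : ℕ) (x : KaehlerDifferential B A) :
    letI := quotPowAlgebra K J h n
    letI := modAnLow (B := B) J n
    ψ K J h n (toQuot K J h n x) = Submodule.Quotient.mk x := by
  letI := quotPowAlgebra K J h n
  letI := modAnLow (B := B) J n
  haveI := smulCommBnAAn K J h n
  have hx : x ∈ Submodule.span A (Set.range (KaehlerDifferential.D B A)) := by
    rw [KaehlerDifferential.span_range_derivation]; trivial
  induction hx using Submodule.span_induction with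
  | mem x hx =>
    obtain ⟨a, rfl⟩ := hx
    rw [toQuot_D, ψ_D]
  | zero => rw [map_zero, map_zero]; rfl
  | add x y hx hy ihx ihy =>
    rw [map_add, map_add, ihx, ihy, Submodule.Quotient.mk_add]
  | smul a x hx ih =>
    rw [(toQuot K J h n).map_smul, smul_eq_mk_smul K J h n a (toQuot K J h n x),
      (ψ K J h n).map_smul, ih, mk_smul_low, Submodule.Quotient.mk_smul]

lemma trans_ψ (m n : ℕ) (hnm : n ≤ m) (ω : Ωq K J h m) :
    letI := quotPowAlgebra K J h m
    letI := quotPowAlgebra K J h n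
    letI := modAnLow (B := B) J m
    letI := modAnLow (B := B) J n
    AdicCompletion.transitionMap J (KaehlerDifferential B A) hnm (ψ K J h m ω) =
      ψ K J h n (Tlin K J h m n hnm ω) := by
  obtain ⟨x, rfl⟩ := toQuot_surjective K J h m ω
  rw [ψ_toQuot, Tlin_toQuot, ψ_toQuot]
  rfl

lemma φ_ψ (n : ℕ) (ω : Ωq K J h (n + 1)) :
    letI := quotPowAlgebra K J h (n + 1)
    letI := modAnLow (B := B) J (n + 1)
    φ K J h n (ψ K J h (n + 1) ω) = Tlin K J h (n + 1) n (Nat.le_succ n) ω := by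
  obtain ⟨x, rfl⟩ := toQuot_surjective K J h (n + 1) ω
  rw [ψ_toQuot, φ_mk, Tlin_toQuot]

/-- The transition maps as additive maps. -/
noncomputable def Tadd (m n : ℕ) (hnm : n ≤ m) : Ωq K J h m →+ Ωq K J h n :=
  letI := quotPowAlgebra K J h m
  letI := modAmΩq K J h m n hnm
  (Tlin K J h m n hnm).toAddMonoidHom

lemma Tadd_apply (m n : ℕ) (hnm : n ≤ m) (ω : Ωq K J h m) :
    Tadd K J h m n hnm ω = Tlin K J h m n hnm ω := rfl

end AKL

/-- Let `B → A` be a continuous homomorphism of preadic rings with ideals of definition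
`K ⊆ B`, `J ⊆ A` satisfying `K·A ⊆ J`, and set `A_n = A/J^(n+1)`, `B_n = B/K^(n+1)`.
Then the `J`-adic completion of `Ω¹_{A/B}` is canonically isomorphic to the inverse limit
`lim_n Ω¹_{A_n/B_n}`, compatibly with the canonical derivations: there are canonical
transition maps `T m n : Ω¹_{A_m/B_m} → Ω¹_{A_n/B_n}` (additive, semilinear over
`A_m → A_n` and commuting with the derivations) and an additive isomorphism of the
completion with the limit of this system which is `A`-semilinear componentwise and
carries (the image in the completion of) the canonical derivation of `A` over `B` to the
canonical derivations of the levels. -/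

theorem adicCompletion_kaehlerDifferential_eq_limit {A B : Type*} [CommRing A] [CommRing B]
    [Algebra B A] (K : Ideal B) (J : Ideal A) (h : K ≤ J.comap (algebraMap B A)) :
    ∃ T : ∀ m n : ℕ, n ≤ m →
        (@KaehlerDifferential (B ⧸ K ^ (m + 1)) (A ⧸ J ^ (m + 1)) _ _ (quotPowAlgebra K J h m) →+
         @KaehlerDifferential (B ⧸ K ^ (n + 1)) (A ⧸ J ^ (n + 1)) _ _ (quotPowAlgebra K J h n)),
      (∀ (m n : ℕ) (hnm : n ≤ m) (x : A ⧸ J ^ (m + 1))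
          (ω : @KaehlerDifferential (B ⧸ K ^ (m + 1)) (A ⧸ J ^ (m + 1)) _ _
            (quotPowAlgebra K J h m)),
          T m n hnm (x • ω) =
            Ideal.Quotient.factor (S := J ^ (m + 1)) (T := J ^ (n + 1))
              (Ideal.pow_le_pow_right (by omega)) x • T m n hnm ω) ∧
      (∀ (m n : ℕ) (hnm : n ≤ m) (a : A),
          T m n hnm
            (@KaehlerDifferential.D _ _ _ _ (quotPowAlgebra K J h m)
              (Ideal.Quotient.mk (J ^ (m + 1)) a)) =
          @KaehlerDifferential.D _ _ _ _ (quotPowAlgebra K J h n)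
            (Ideal.Quotient.mk (J ^ (n + 1)) a)) ∧
      ∃ e : AdicCompletion J (KaehlerDifferential B A) ≃
          {f : ∀ n : ℕ, @KaehlerDifferential (B ⧸ K ^ (n + 1)) (A ⧸ J ^ (n + 1)) _ _
              (quotPowAlgebra K J h n) //
            ∀ (m n : ℕ) (hnm : n ≤ m), T m n hnm (f m) = f n},
        (∀ (ω ω' : AdicCompletion J (KaehlerDifferential B A)) (n : ℕ),
            (e (ω + ω')).1 n = (e ω).1 n + (e ω').1 n) ∧
        (∀ (a : A) (ω : AdicCompletion J (KaehlerDifferential B A)) (n : ℕ),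
            (e (a • ω)).1 n = Ideal.Quotient.mk (J ^ (n + 1)) a • (e ω).1 n) ∧
        (∀ (a : A) (n : ℕ),
            (e (AdicCompletion.of J (KaehlerDifferential B A) (KaehlerDifferential.D B A a))).1 n =
              @KaehlerDifferential.D _ _ _ _ (quotPowAlgebra K J h n)
                (Ideal.Quotient.mk (J ^ (n + 1)) a)) := by
  refine ⟨fun m n hnm => AKL.Tadd K J h m n hnm, ?_, ?_, ?_⟩
  · intro m n hnm x ω
    letI := quotPowAlgebra K J h m
    letI := quotPowAlgebra K J h n
    rw [AKL.Tadd_apply, AKL.Tadd_apply]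
    exact AKL.Tlin_smul K J h m n hnm x ω
  · intro m n hnm a
    rw [AKL.Tadd_apply]
    exact AKL.Tlin_D K J h m n hnm a
  refine ⟨⟨fun f => ⟨fun n => AKL.φ K J h n (f.1 (n + 1)), ?_⟩,
      fun g => ⟨fun n => AKL.ψ K J h n (g.1 n), ?_⟩, ?_, ?_⟩, ?_, ?_, ?_⟩
  · -- forward compatibility
    intro m n hnm
    show AKL.Tadd K J h m n hnm (AKL.φ K J h m (f.1 (m + 1))) = AKL.φ K J h n (f.1 (n + 1))
    rw [AKL.Tadd_apply]
    obtain ⟨x, hx⟩ := Submodule.Quotient.mk_surjective _ (f.1 (m + 1))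
    have h3 : f.1 (n + 1) = Submodule.Quotient.mk x := by
      rw [← f.2 (Nat.succ_le_succ hnm), ← hx]; rfl
    rw [← hx, h3]
    exact AKL.Tlin_toQuot K J h m n hnm x
  · -- backward compatibility
    intro m n hmn
    have h2 := g.2 n m hmn
    rw [AKL.Tadd_apply] at h2
    show AdicCompletion.transitionMap J (KaehlerDifferential B A) hmn
        (AKL.ψ K J h n (g.1 n)) = AKL.ψ K J h m (g.1 m)
    rw [AKL.trans_ψ K J h n m hmn]
    exact congrArg _ h2
  · -- left inverse
    intro f
    refine AdicCompletion.ext (fun n => ?_)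
    show AKL.ψ K J h n (AKL.φ K J h n (f.1 (n + 1))) = f.1 n
    obtain ⟨x, hx⟩ := Submodule.Quotient.mk_surjective _ (f.1 (n + 1))
    have h3 : f.1 n = Submodule.Quotient.mk x := by
      rw [← f.2 (Nat.le_succ n), ← hx]; rfl
    rw [← hx, h3, AKL.φ_mk, AKL.ψ_toQuot]
  · -- right inverse
    intro g
    refine Subtype.ext (funext fun n => ?_)
    show AKL.φ K J h n (AKL.ψ K J h (n + 1) (g.1 (n + 1))) = g.1 n
    rw [AKL.φ_ψ]
    have := g.2 (n + 1) n (Nat.le_succ n)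
    rw [AKL.Tadd_apply] at this
    exact this
  · intro ω ω' n
    show AKL.φ K J h n ((ω + ω').1 (n + 1)) = _
    rw [AdicCompletion.val_add, Pi.add_apply, map_add]
    rfl
  · intro a ω n
    letI := quotPowAlgebra K J h n
    haveI := AKL.smulCommBnAAn K J h n
    show AKL.φ K J h n ((a • ω).1 (n + 1)) = _
    rw [AdicCompletion.val_smul, Pi.smul_apply, (AKL.φ K J h n).map_smul,
      AKL.smul_eq_mk_smul K J h n a (AKL.φ K J h n (ω.1 (n + 1)))]
    rfl
  · intro a n
    show AKL.φ K J h n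
        ((AdicCompletion.of J (KaehlerDifferential B A) (KaehlerDifferential.D B A a)).1 (n + 1)) =
      _
    rw [AdicCompletion.of_apply]
    show AKL.toQuot K J h n (KaehlerDifferential.D B A a) = _
    rw [AKL.toQuot_D]
end

section
/- Let Q be the field of rational numbers and R = Q[[T_1,...,T_r]] with r ≥ 1. Then the module of Kähler differentials Ω¹_{R/Q} is not a finitely generated R-module. -/
open TrivSqZeroExt in
theorem exists_derivation_extension {A K : Type} [CommRing A] [CommRing K]
    [Algebra ℚ A] [Algebra ℚ K] [Algebra A K] [IsScalarTower ℚ A K]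
    [Algebra.FormallySmooth A K] (d : Derivation ℚ A K) :
    ∃ D : Derivation ℚ K K, ∀ a, D (algebraMap A K a) = d a := by
  classical
  letI : Algebra A (TrivSqZeroExt K K) := RingHom.toAlgebra
    { toFun := fun a => (algebraMap A K a, d a)
      map_one' := by ext <;> simp
      map_mul' := fun a b => by
        refine TrivSqZeroExt.ext ?_ ?_
        · simp [fst_mul]
          exact (fst_mul (R := K) (M := K) (show TrivSqZeroExt K K from (algebraMap A K a, d a))
            (show TrivSqZeroExt K K from (algebraMap A K b, d b))).symm
        · simp only [snd_mul, fst_mk, snd_mk, map_mul, op_smul_eq_smul]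
          rw [Derivation.leibniz]
          try simp [Algebra.smul_def]
          try ring
          rw [mul_comm (algebraMap A K b)]
          exact (snd_mul (R := K) (M := K) (show TrivSqZeroExt K K from (algebraMap A K a, d a))
            (show TrivSqZeroExt K K from (algebraMap A K b, d b))).symm
      map_zero' := by ext <;> simp
      map_add' := fun a b => by refine TrivSqZeroExt.ext ?_ ?_ <;> simp <;> rfl }
  have halg : ∀ a : A, algebraMap A (TrivSqZeroExt K K) a = (algebraMap A K a, d a) :=
    fun a => rfl
  set I : Ideal (TrivSqZeroExt K K) :=
    RingHom.ker ((fstHom K K K : TrivSqZeroExt K K →ₐ[K] K) : TrivSqZeroExt K K →+* K) with hI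
  have memI : ∀ x : TrivSqZeroExt K K, x ∈ I ↔ fst x = 0 := fun x => by rw [hI, RingHom.mem_ker]; exact Iff.rfl
  have hI2 : I ^ 2 = ⊥ := by
    rw [pow_two, eq_bot_iff]
    refine Ideal.mul_le.2 fun a ha b hb => ?_
    rw [Ideal.mem_bot]
    refine TrivSqZeroExt.ext ?_ ?_
    · simp [fst_mul, (memI a).1 ha]
    · simp [snd_mul, (memI a).1 ha, (memI b).1 hb]
  set g : K →ₐ[A] TrivSqZeroExt K K ⧸ I :=
    { toFun := fun k => Ideal.Quotient.mk I (TrivSqZeroExt.inl k)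
      map_one' := by simp [TrivSqZeroExt.inl_one]
      map_mul' := fun a b => by
        show Ideal.Quotient.mk I (TrivSqZeroExt.inl (a * b)) = _
        rw [TrivSqZeroExt.inl_mul, map_mul]
      map_zero' := by simp [TrivSqZeroExt.inl_zero]
      map_add' := fun a b => by
        show Ideal.Quotient.mk I (TrivSqZeroExt.inl (a + b)) = _
        rw [TrivSqZeroExt.inl_add, map_add]
      commutes' := fun a => by
        show _ = Ideal.Quotient.mk I (algebraMap A (TrivSqZeroExt K K) a)
        rw [Ideal.Quotient.mk_eq_mk_iff_sub_mem, memI, halg]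
        show fst ((algebraMap A K a, (0 : K)) - (algebraMap A K a, d a)) = 0
        simp } with hg
  obtain ⟨σ, hσ⟩ := Algebra.FormallySmooth.exists_lift I ⟨2, hI2⟩ g
  have hfst : ∀ k : K, fst (σ k) = k := by
    intro k
    have h1 : Ideal.Quotient.mk I (σ k) = Ideal.Quotient.mk I (TrivSqZeroExt.inl k) := by
      have := congrArg (fun f => f k) hσ
      simpa [hg] using this
    rw [Ideal.Quotient.mk_eq_mk_iff_sub_mem, memI] at h1
    have h2 : fst (σ k) - k = 0 := by simpa using h1
    exact sub_eq_zero.mp h2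
  refine ⟨{ toFun := fun k => snd (σ k)
            map_add' := fun a b => by
              show snd (σ (a + b)) = snd (σ a) + snd (σ b)
              rw [map_add, snd_add]
            map_smul' := fun q k => by
              have : ((sndHom K K).toAddMonoidHom.comp (σ : K →+* TrivSqZeroExt K K).toAddMonoidHom) (q • k)
                  = q • (((sndHom K K).toAddMonoidHom.comp (σ : K →+* TrivSqZeroExt K K).toAddMonoidHom) k) :=
                map_rat_smul _ q k
              simpa using this
            map_one_eq_zero' := by
              show snd (σ 1) = 0
              rw [map_one]
              simp
            leibniz' := fun a b => by
              show snd (σ (a * b)) = a • snd (σ b) + b • snd (σ a)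
              rw [map_mul, snd_mul, hfst, hfst, op_smul_eq_smul]
              try simp [smul_eq_mul] }, ?_⟩
  intro a
  show snd (σ (algebraMap A K a)) = d a
  rw [σ.commutes a, halg]
  rfl


open KaehlerDifferential in
theorem finite_kaehler_fractionRing (R : Type) [CommRing R] [IsDomain R] [Algebra ℚ R]
    (h : Module.Finite R (KaehlerDifferential ℚ R)) :
    Module.Finite (FractionRing R) (KaehlerDifferential ℚ (FractionRing R)) := by
  classical
  set K := FractionRing R with hK
  set f : KaehlerDifferential ℚ R →ₗ[R] KaehlerDifferential ℚ K :=
    KaehlerDifferential.map ℚ ℚ R K with hf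
  have hspan : Submodule.span K
      (Set.range fun x : R => KaehlerDifferential.D ℚ K (algebraMap R K x)) = ⊤ := by
    rw [← top_le_iff, ← KaehlerDifferential.span_range_derivation ℚ K, Submodule.span_le]
    rintro _ ⟨y, rfl⟩
    obtain ⟨a, s, hs, rfl⟩ := IsFractionRing.div_surjective (A := R) y
    set u := algebraMap R K s with hu
    have hu0 : u ≠ 0 :=
      IsFractionRing.to_map_ne_zero_of_mem_nonZeroDivisors hs
    have hmul : algebraMap R K a / u * u = algebraMap R K a := div_mul_cancel₀ _ hu0
    have hD := congrArg (KaehlerDifferential.D ℚ K) hmul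
    rw [Derivation.leibniz] at hD
    -- hD : (a/u) • D u + u • D (a/u) = D (alg a)
    have key : KaehlerDifferential.D ℚ K (algebraMap R K a / u)
        = u⁻¹ • KaehlerDifferential.D ℚ K (algebraMap R K a)
          - (u⁻¹ * (algebraMap R K a / u)) • KaehlerDifferential.D ℚ K u := by
      have := congrArg (fun z => u⁻¹ • z) hD
      simp only [smul_add, smul_smul] at this
      rw [inv_mul_cancel₀ hu0, one_smul] at this
      rw [← this]
      abel
    rw [key]
    refine Submodule.sub_mem _ (Submodule.smul_mem _ _ (Submodule.subset_span ⟨a, rfl⟩))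
      (Submodule.smul_mem _ _ (Submodule.subset_span ⟨s, rfl⟩))
  obtain ⟨s, hs⟩ := Module.finite_def.mp h
  refine ⟨⟨s.image f, ?_⟩⟩
  rw [eq_top_iff, ← hspan, Submodule.span_le]
  rintro _ ⟨x, rfl⟩
  have hx : f (KaehlerDifferential.D ℚ R x) = KaehlerDifferential.D ℚ K (algebraMap R K x) :=
    KaehlerDifferential.map_D ℚ ℚ R K x
  show KaehlerDifferential.D ℚ K (algebraMap R K x) ∈ _
  rw [← hx]
  have hmem : KaehlerDifferential.D ℚ R x ∈ Submodule.span R (s : Set (KaehlerDifferential ℚ R)) := by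
    rw [hs]; trivial
  have h1 : f (KaehlerDifferential.D ℚ R x) ∈ Submodule.span R (f '' ↑s) :=
    Submodule.apply_mem_span_image_of_mem_span f hmem
  have h2 : f (KaehlerDifferential.D ℚ R x) ∈ Submodule.span K (f '' ↑s) :=
    Submodule.span_le_restrictScalars R K _ h1
  simpa [Finset.coe_image] using h2



theorem not_finite_kaehler_of_uncountable (K : Type) [Field K] [Algebra ℚ K] [Uncountable K] :
    ¬ Module.Finite K (KaehlerDifferential ℚ K) := by
  classical
  intro hfin
  haveI : FiniteDimensional K (KaehlerDifferential ℚ K) := hfin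
  haveI hder_fd : FiniteDimensional K (Derivation ℚ K K) :=
    Module.Finite.equiv (KaehlerDifferential.linearMapEquivDerivation ℚ K)
  obtain ⟨s, hb⟩ := exists_isTranscendenceBasis ℚ
    K
  haveI : Infinite s := by
    rw [← not_finite_iff_infinite]
    intro hfinite
    have hcount : Countable K := by
      rcases isEmpty_or_nonempty s with he | hne
      · haveI : Algebra.IsAlgebraic ℚ K := hb.isEmpty_iff_isAlgebraic.mp he
        have hc := Algebra.IsAlgebraic.cardinalMk_le_max ℚ K
        rw [← Cardinal.mk_le_aleph0_iff]
        exact hc.trans (max_le Cardinal.mk_le_aleph0 le_rfl)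
      · have hcard := hb.lift_cardinalMk_eq_max_lift
        simp only [Cardinal.lift_id] at hcard
        rw [← Cardinal.mk_le_aleph0_iff, hcard]
        exact sup_le (sup_le Cardinal.mk_le_aleph0 Cardinal.mk_le_aleph0) le_rfl
    exact (not_countable : ¬ Countable K) hcount
  set n := Module.finrank K (Derivation ℚ K K) with hn
  let emb : Fin (n+1) ↪ s := Fin.valEmbedding.trans (Infinite.natEmbedding s)
  letI : Algebra (MvPolynomial s ℚ) K := (MvPolynomial.aeval ((↑) : s → K)).toRingHom.toAlgebra
  haveI : IsScalarTower ℚ (MvPolynomial s ℚ) K :=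
    IsScalarTower.of_algebraMap_eq (fun q => ((MvPolynomial.aeval ((↑) : s → K)).commutes q).symm)
  set L := IntermediateField.adjoin ℚ (Set.range ((↑) : s → K)) with hL
  letI : Algebra (MvPolynomial s ℚ) L := RingHom.toAlgebra
    ((hb.1.aevalEquivField : FractionRing (MvPolynomial s ℚ) ≃+* L).toRingHom.comp
      (algebraMap (MvPolynomial s ℚ) (FractionRing (MvPolynomial s ℚ))))
  haveI : IsScalarTower (MvPolynomial s ℚ) L K := by
    refine IsScalarTower.of_algebraMap_eq (fun p => ?_)
    show (MvPolynomial.aeval ((↑) : s → K)) p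
      = ((hb.1.aevalEquivField (algebraMap (MvPolynomial s ℚ)
          (FractionRing (MvPolynomial s ℚ)) p) : L) : K)
    exact (hb.1.aevalEquivField_algebraMap_apply_coe p).symm
  haveI : Algebra.FormallyEtale (MvPolynomial s ℚ) (FractionRing (MvPolynomial s ℚ)) :=
    Algebra.FormallyEtale.of_isLocalization (nonZeroDivisors (MvPolynomial s ℚ))
  letI eAL : FractionRing (MvPolynomial s ℚ) ≃ₐ[MvPolynomial s ℚ] L :=
    AlgEquiv.ofRingEquiv (f := (hb.1.aevalEquivField : FractionRing (MvPolynomial s ℚ) ≃+* L))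
      (fun p => rfl)
  haveI : Algebra.FormallyEtale (MvPolynomial s ℚ) L := Algebra.FormallyEtale.of_equiv eAL
  haveI : CharZero L := charZero_of_injective_algebraMap (algebraMap ℚ L).injective
  haveI : Algebra.IsAlgebraic L K := hb.isAlgebraic_field
  haveI : Algebra.FormallyEtale L K := Algebra.FormallyEtale.of_isSeparable L K
  haveI : Algebra.FormallyEtale (MvPolynomial s ℚ) K :=
    Algebra.FormallyEtale.comp (MvPolynomial s ℚ) L K
  have hder : ∀ i : Fin (n+1), ∃ D : Derivation ℚ K K,
      ∀ j : Fin (n+1), D ((emb j : s) : K) = if i = j then 1 else 0 := by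
    intro i
    obtain ⟨D, hD⟩ := exists_derivation_extension
      (MvPolynomial.mkDerivation ℚ (fun j : s => if j = emb i then (1:K) else 0))
    refine ⟨D, fun j => ?_⟩
    have hXj : algebraMap (MvPolynomial s ℚ) K (MvPolynomial.X (emb j)) = ((emb j : s) : K) :=
      MvPolynomial.aeval_X _ _
    rw [← hXj, hD, MvPolynomial.mkDerivation_X]
    by_cases h : i = j
    · simp [h]
    · have : emb j ≠ emb i := fun hc => h (emb.injective hc).symm
      simp [h, this]
  choose D hD using hder
  have hli : LinearIndependent K D := by
    rw [Fintype.linearIndependent_iff]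
    intro g hg j
    let ev : Derivation ℚ K K →ₗ[K] K :=
      { toFun := fun E => E ((emb j : s) : K)
        map_add' := fun E F => rfl
        map_smul' := fun c E => rfl }
    have h0 := congrArg ev hg
    rw [map_sum, map_zero] at h0
    have : ∀ i, ev (g i • D i) = g i * (if i = j then 1 else 0) := by
      intro i
      simp [ev, hD i j]
    rw [Finset.sum_congr rfl (fun i _ => this i)] at h0
    simpa using h0
  have hcard := hli.fintype_card_le_finrank
  simp only [Fintype.card_fin, ← hn] at hcard
  omega


/-- Let `ℚ` be the field of rational numbers and `R = ℚ[[T_1,…,T_r]]` with `r ≥ 1`. Then the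
module of Kähler differentials `Ω¹_{R/ℚ}` is not a finitely generated `R`-module. -/
theorem kaehlerDifferential_powerSeries_not_finite (r : ℕ) (hr : 1 ≤ r) :
    ¬ Module.Finite (MvPowerSeries (Fin r) ℚ)
      (KaehlerDifferential ℚ (MvPowerSeries (Fin r) ℚ)) := by
  intro h
  classical
  haveI : Infinite ((Fin r) →₀ ℕ) :=
    Infinite.of_injective (fun n => Finsupp.single (⟨0, hr⟩ : Fin r) n)
      (Finsupp.single_injective _)
  haveI : Uncountable (Set ((Fin r) →₀ ℕ)) := by
    rw [← not_countable_iff]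
    intro hc
    have h1 : Cardinal.mk (Set ((Fin r) →₀ ℕ)) ≤ Cardinal.aleph0 := Cardinal.mk_le_aleph0
    rw [Cardinal.mk_set] at h1
    have h2 : Cardinal.aleph0 < 2 ^ (Cardinal.mk ((Fin r) →₀ ℕ)) :=
      lt_of_lt_of_le (Cardinal.cantor _)
        (Cardinal.power_le_power_left two_ne_zero (Cardinal.aleph0_le_mk _))
    exact absurd (h2.trans_le h1) (lt_irrefl _)
  haveI : Uncountable (MvPowerSeries (Fin r) ℚ) := by
    have hinj : Function.Injective
        (fun t : Set ((Fin r) →₀ ℕ) =>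
          ((fun d => if d ∈ t then 1 else 0) : MvPowerSeries (Fin r) ℚ)) := by
      intro t t' ht
      ext d
      have := congrArg (fun f => MvPowerSeries.coeff d f) ht
      change (if d ∈ t then (1:ℚ) else 0) = if d ∈ t' then 1 else 0 at this
      by_cases h1 : d ∈ t <;> by_cases h2 : d ∈ t' <;>
        simp [h1, h2] at this ⊢
    exact hinj.uncountable
  haveI : IsDomain (MvPowerSeries (Fin r) ℚ) := NoZeroDivisors.to_isDomain _
  haveI : Uncountable (FractionRing (MvPowerSeries (Fin r) ℚ)) :=
    (IsFractionRing.injective (MvPowerSeries (Fin r) ℚ)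
      (FractionRing (MvPowerSeries (Fin r) ℚ))).uncountable
  exact not_finite_kaehler_of_uncountable (FractionRing (MvPowerSeries (Fin r) ℚ))
    (finite_kaehler_fractionRing (MvPowerSeries (Fin r) ℚ) h)
end

section
/- Let B → A be a ring homomorphism with A noetherian and J-adically complete for an ideal J ⊆ A. If A/J^{n+1} is a flat B-algebra for every n ≥ 0, then A is a flat B-algebra. -/
open TensorProduct in

private lemma comm_comm_apply {R M N : Type*} [CommSemiring R] [AddCommMonoid M]
    [AddCommMonoid N] [Module R M] [Module R N] (x : M ⊗[R] N) :
    (TensorProduct.comm R N M) ((TensorProduct.comm R M N) x) = x := by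
  induction x using TensorProduct.induction_on with
  | zero => simp
  | tmul m n => simp
  | add u v hu hv => rw [map_add, map_add, hu, hv]

/-- Let `B → A` be a ring homomorphism with `A` noetherian and `J`-adically complete for an ideal
`J ⊆ A`. If `A/J^(n+1)` is a flat `B`-algebra for every `n ≥ 0`, then `A` is a flat `B`-algebra. -/
theorem flat_of_flat_quotients (A B : Type*) [CommRing A] [CommRing B] [Algebra B A]
    [IsNoetherianRing A] (J : Ideal A) [IsAdicComplete J A]
    (h : ∀ n : ℕ, Module.Flat B (A ⧸ J ^ (n + 1))) :
    Module.Flat B A := by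
  rw [Module.Flat.iff_rTensor_injective]
  intro I hI
  rw [injective_iff_map_eq_zero]
  intro x hx
  -- move to `A ⊗[B] I`
  set y : TensorProduct B A ↥I := TensorProduct.comm B I A x with hy_def
  have hcomm : (TensorProduct.comm B A I) y = x := comm_comm_apply x
  have hy : LinearMap.lTensor A I.subtype y = 0 := by
    have := congrArg (fun f => f y) (LinearMap.comm_comp_rTensor_comp_comm_eq (Q := A) I.subtype)
    simp only [LinearMap.coe_comp, Function.comp_apply, LinearEquiv.coe_coe] at this
    rw [← this, hcomm, hx, map_zero]
  suffices hy0 : y = 0 by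
    have : (TensorProduct.comm B A I) y = 0 := by rw [hy0, map_zero]
    rwa [hcomm] at this
  -- `A ⊗[B] I` is a finite `A`-module
  haveI : Module.Finite B I := Module.Finite.iff_fg.mpr hI
  -- key claim: `y ∈ J^(n+1) • ⊤` for all `n`
  have key : ∀ n : ℕ, y ∈ (J ^ (n + 1) • ⊤ : Submodule A (TensorProduct B A ↥I)) := by
    intro n
    set K : Submodule B A := (J ^ (n + 1)).restrictScalars B with hK
    set q : A →ₗ[B] (A ⧸ J ^ (n + 1)) := (Ideal.Quotient.mkₐ B (J ^ (n + 1))).toLinearMap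
      with hq
    have hqsurj : Function.Surjective q := Ideal.Quotient.mk_surjective
    have hexact : Function.Exact K.subtype q := by
      rw [LinearMap.exact_iff]
      ext a
      simp only [LinearMap.mem_ker, Submodule.range_subtype, hq, AlgHom.toLinearMap_apply,
        Ideal.Quotient.mkₐ_eq_mk, Ideal.Quotient.eq_zero_iff_mem, hK,
        Submodule.restrictScalars_mem]
    -- the image of `y` in `(A ⧸ J^(n+1)) ⊗[B] I` is zero, by flatness
    have hz : LinearMap.rTensor I q y = 0 := by
      haveI := h n
      have hinj := Module.Flat.iff_lTensor_injective'.mp (h n) I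
      apply hinj
      have : LinearMap.lTensor (A ⧸ J ^ (n + 1)) I.subtype ∘ₗ LinearMap.rTensor I q
          = LinearMap.rTensor B q ∘ₗ LinearMap.lTensor A I.subtype := by
        rw [LinearMap.lTensor_comp_rTensor, LinearMap.rTensor_comp_lTensor]
      have := congrArg (fun f => f y) this
      simp only [LinearMap.coe_comp, Function.comp_apply] at this
      rw [this, hy, map_zero, map_zero]
    -- hence `y` is in the image of `K ⊗[B] I`
    have hmem : y ∈ LinearMap.range (LinearMap.rTensor I K.subtype) := by
      have := rTensor_exact (N := A) (P := A ⧸ J ^ (n + 1)) I hexact hqsurj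
      rw [LinearMap.exact_iff] at this
      rw [← this]
      exact hz
    obtain ⟨w, hw⟩ := hmem
    rw [← hw]
    clear hw hz
    induction w using TensorProduct.induction_on with
    | zero => simp
    | tmul k i =>
        have : LinearMap.rTensor I K.subtype (k ⊗ₜ[B] i) = (k : A) ⊗ₜ[B] i := rfl
        rw [this]
        have hk : (k : A) ∈ J ^ (n + 1) := k.2
        have : (k : A) ⊗ₜ[B] i = (k : A) • ((1 : A) ⊗ₜ[B] i) := by
          rw [TensorProduct.smul_tmul', smul_eq_mul, mul_one]
        rw [this]
        exact Submodule.smul_mem_smul hk Submodule.mem_top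
    | add u v hu hv =>
        rw [map_add]
        exact Submodule.add_mem _ hu hv
  -- transport to a module in the same universe as `A` to apply Krull's intersection theorem
  obtain ⟨m, f, hf⟩ := Module.Finite.exists_fin' (R := A) (M := TensorProduct B A ↥I)
  let e : ((Fin m → A) ⧸ LinearMap.ker f) ≃ₗ[A] TensorProduct B A ↥I :=
    f.quotKerEquivOfSurjective hf
  set z := e.symm y with hz_def
  have hez : e z = y := e.apply_symm_apply y
  have hmem : z ∈ (⨅ i : ℕ, J ^ i • ⊤ :
      Submodule A ((Fin m → A) ⧸ LinearMap.ker f)) := by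
    rw [Submodule.mem_iInf]
    intro i
    have hy' : y ∈ (J ^ i • ⊤ : Submodule A (TensorProduct B A ↥I)) := by
      cases i with
      | zero => simp
      | succ n => exact key n
    have hmap : Submodule.map e.symm.toLinearMap
        (J ^ i • ⊤ : Submodule A (TensorProduct B A ↥I)) = J ^ i • ⊤ := by
      rw [Submodule.map_smul'', Submodule.map_top, LinearEquiv.range]
    rw [← hmap]
    exact Submodule.mem_map_of_mem hy'
  obtain ⟨r, hr⟩ := (Ideal.mem_iInf_smul_pow_eq_bot_iff J z).mp hmem
  have hry : (r : A) • y = y := by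
    rw [← hez, ← map_smul, hr]
  have hrJ : (r : A) ∈ (⊥ : Ideal A).jacobson := IsAdicComplete.le_jacobson_bot J r.2
  have hunit : IsUnit (1 - (r : A)) := by
    have := (Ideal.mem_jacobson_bot).mp hrJ (-1)
    rwa [mul_neg_one, neg_add_eq_sub] at this
  apply hunit.smul_left_cancel.mp
  rw [smul_zero, sub_smul, one_smul, hry, sub_self]
end

section
/- Let A be a noetherian J-adic ring such that for every prime ideal p ⊆ A that is open in the J-adic topology (i.e., contains some power of J), the localization J_p = 0. Then J = 0. -/
/-- Let `A` be a noetherian `J`-adic ring such that for every prime ideal `p ⊆ A` open in the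
`J`-adic topology (i.e. `J ⊆ p`), the image of `J` in the localization `A_p` vanishes.
Then `J = 0`. -/
theorem ideal_eq_bot_of_localizations (A : Type*) [CommRing A] [IsNoetherianRing A] (J : Ideal A)
    [IsAdicComplete J A]
    (h : ∀ (p : Ideal A) [p.IsPrime], J ≤ p →
      J.map (algebraMap A (Localization.AtPrime p)) = ⊥) :
    J = ⊥ := by
  classical
  -- Step 1: Ann(J) ⊔ J = ⊤
  have key : J.annihilator ⊔ J = ⊤ := by
    by_contra hne
    obtain ⟨m, hm, hle⟩ := Ideal.exists_le_maximal _ hne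
    haveI := hm.isPrime
    have hJm : J ≤ m := le_trans le_sup_right hle
    have h0 := h m hJm
    obtain ⟨s, hs⟩ := IsNoetherian.noetherian J
    -- for each generator x ∈ s, find cₓ ∉ m with cₓ * x = 0
    have hkill : ∀ x ∈ s, ∃ c : m.primeCompl, (c : A) * x = 0 := by
      intro x hx
      have hxJ : x ∈ J := hs ▸ Ideal.subset_span hx
      have : algebraMap A (Localization.AtPrime m) x = 0 := by
        have := Ideal.mem_map_of_mem (algebraMap A (Localization.AtPrime m)) hxJ
        rwa [h0, Submodule.mem_bot] at this
      exact (IsLocalization.map_eq_zero_iff m.primeCompl _ x).mp this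
    choose c hc using hkill
    set P : A := ∏ x ∈ s.attach, (c x.1 x.2 : A) with hP
    have hPnm : P ∉ m := by
      intro hPm
      obtain ⟨x, -, hx⟩ := (hm.isPrime.prod_mem_iff).mp hPm
      exact (c x.1 x.2).2 hx
    have hPann : P ∈ J.annihilator := by
      rw [Submodule.mem_annihilator]
      intro n hn
      rw [← hs] at hn
      refine Submodule.span_induction ?_ ?_ ?_ ?_ hn
      · intro y hy
        have : P • y = (∏ x ∈ s.attach.erase ⟨y, hy⟩, (c x.1 x.2 : A)) *
            ((c y hy : A) * y) := by
          rw [smul_eq_mul, hP, ← Finset.prod_erase_mul _ _ (Finset.mem_attach s ⟨y, hy⟩),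
            mul_assoc]
        rw [this, hc y hy, mul_zero]
      · simp
      · intro a b _ _ ha hb; rw [smul_add, ha, hb, add_zero]
      · intro a y _ hy; rw [smul_comm, hy, smul_zero]
    exact hPnm (hle (Ideal.mem_sup_left hPann))
  -- Step 2: J ≤ J • J
  obtain ⟨a, ha, j, hj, haj⟩ := Submodule.mem_sup.mp (key ▸ Submodule.mem_top (x := (1 : A)))
  have hJJ : J ≤ J • J := by
    intro x hx
    have hax : a * x = 0 := Submodule.mem_annihilator.mp ha x hx
    have : x = j * x := by
      have : (a + j) * x = x := by rw [haj, one_mul]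
      rw [add_mul, hax, zero_add] at this
      exact this.symm
    rw [this]
    exact Submodule.smul_mem_smul hj hx
  -- Step 3: Nakayama using completeness
  exact Submodule.eq_bot_of_le_smul_of_le_jacobson_bot J J (IsNoetherian.noetherian J) hJJ
    (IsAdicComplete.le_jacobson_bot J)
end

section
/- Let A be a ring with an ideal J, let 0 → M'' → M' → M → 0 be a sequence of A-modules whose J-adic completions form a split exact sequence of Â-modules. Then for every n, the induced sequence 0 → M''⊗_A A/J^{n+1} → M'⊗_A A/J^{n+1} → M⊗_A A/J^{n+1} → 0 is split exact. -/
open TensorProduct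

section Aux

variable {A : Type*} [CommRing A] (J : Ideal A)
variable {P Q : Type*} [AddCommGroup P] [Module A P] [AddCommGroup Q] [Module A Q]

private lemma aux_map_of (h : P →ₗ[A] Q) (x : P) :
    AdicCompletion.map J h (AdicCompletion.of J P x) = AdicCompletion.of J Q (h x) := by
  ext n
  simp [AdicCompletion.map_val_apply]

private lemma aux_eval_map (h : P →ₗ[A] Q) (n : ℕ) (x : AdicCompletion J P) :
    AdicCompletion.eval J Q n (AdicCompletion.map J h x) =
      h.reduceModIdeal (J ^ n) (AdicCompletion.eval J P n x) := rfl

/-- Naturality of `quotTensorEquivQuotSMul`. -/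
private lemma aux_quotTensor_natural (I : Ideal A) (h : P →ₗ[A] Q)
    (x : (A ⧸ I) ⊗[A] P) :
    TensorProduct.quotTensorEquivQuotSMul Q I (LinearMap.baseChange (A ⧸ I) h x) =
      (LinearMap.reduceModIdeal I h) (TensorProduct.quotTensorEquivQuotSMul P I x) := by
  induction x using TensorProduct.induction_on with
  | zero => simp
  | tmul a p =>
    obtain ⟨a, rfl⟩ := Ideal.Quotient.mk_surjective a
    simp [TensorProduct.quotTensorEquivQuotSMul_mk_tmul]
  | add x y hx hy => simp [hx, hy]

private lemma aux_kill {A : Type*} [CommRing A] {P : Type*} [AddCommGroup P] [Module A P]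
    (I : Ideal A) (a : A) (ha : a ∈ I) (z : P ⧸ (I • ⊤ : Submodule A P)) : a • z = 0 := by
  obtain ⟨y, rfl⟩ := Submodule.Quotient.mk_surjective _ z
  rw [← Submodule.Quotient.mk_smul, Submodule.Quotient.mk_eq_zero]
  exact Submodule.smul_mem_smul ha Submodule.mem_top

end Aux

/-- Let `A` be a ring with an ideal `J` and let `0 → M'' → M' → M → 0` be a sequence of
`A`-modules whose `J`-adic completions form a split exact sequence of `Â`-modules. Then for
every `n`, the induced sequence
`0 → M''⊗_A A/J^(n+1) → M'⊗_A A/J^(n+1) → M⊗_A A/J^(n+1) → 0` is split exact. -/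
theorem split_exact_mod_ideal_of_split_exact_completion (A : Type*) [CommRing A] (J : Ideal A)
    (M'' M' M : Type*) [AddCommGroup M''] [AddCommGroup M'] [AddCommGroup M]
    [Module A M''] [Module A M'] [Module A M] (f : M'' →ₗ[A] M') (g : M' →ₗ[A] M)
    (hinj : Function.Injective (AdicCompletion.map J f))
    (hex : Function.Exact (AdicCompletion.map J f) (AdicCompletion.map J g))
    (hsurj : Function.Surjective (AdicCompletion.map J g))
    (hsplit : ∃ s : AdicCompletion J M →ₗ[AdicCompletion J A] AdicCompletion J M',
      (AdicCompletion.map J g).comp s = LinearMap.id) :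
    ∀ n : ℕ,
      Function.Injective (LinearMap.baseChange (A ⧸ J ^ (n + 1)) f) ∧
      Function.Exact (LinearMap.baseChange (A ⧸ J ^ (n + 1)) f)
        (LinearMap.baseChange (A ⧸ J ^ (n + 1)) g) ∧
      Function.Surjective (LinearMap.baseChange (A ⧸ J ^ (n + 1)) g) ∧
      ∃ s : TensorProduct A (A ⧸ J ^ (n + 1)) M →ₗ[A ⧸ J ^ (n + 1)]
          TensorProduct A (A ⧸ J ^ (n + 1)) M',
        (LinearMap.baseChange (A ⧸ J ^ (n + 1)) g).comp s = LinearMap.id := by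
  obtain ⟨s, hs⟩ := hsplit
  have hs' : ∀ y, AdicCompletion.map J g (s y) = y := fun y => DFunLike.congr_fun hs y
  -- a retraction of `map J f`
  set p : AdicCompletion J M' →ₗ[AdicCompletion J A] AdicCompletion J M' :=
    LinearMap.id - s ∘ₗ AdicCompletion.map J g with hpdef
  have hpval : ∀ y, p y = y - s (AdicCompletion.map J g y) := fun y => rfl
  have hp : ∀ y : AdicCompletion J M',
      p y ∈ LinearMap.range (AdicCompletion.map J f) := by
    intro y
    rw [hpval, ← hex.linearMap_ker_eq, LinearMap.mem_ker, map_sub, hs', sub_self]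
  set r : AdicCompletion J M' →ₗ[AdicCompletion J A] AdicCompletion J M'' :=
    ((LinearEquiv.ofInjective (AdicCompletion.map J f) hinj).symm.toLinearMap).comp
      (LinearMap.codRestrict _ p hp) with hr
  have hrval : ∀ y, AdicCompletion.map J f (r y) = p y := by
    intro y
    simp only [hr, LinearMap.comp_apply, LinearEquiv.coe_coe]
    exact congrArg Subtype.val
      ((LinearEquiv.ofInjective (AdicCompletion.map J f) hinj).apply_symm_apply _)
  have hrf : ∀ x, r (AdicCompletion.map J f x) = x := by
    intro x
    apply hinj
    rw [hrval, hpval, hex.apply_apply_eq_zero, map_zero, sub_zero]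
  intro n
  set I : Ideal A := J ^ (n + 1) with hIdef
  -- quotient-level maps
  set fbar := f.reduceModIdeal I with hfbar
  set gbar := g.reduceModIdeal I with hgbar
  -- section at quotient level
  set σs : M →ₗ[A] M' ⧸ (I • ⊤ : Submodule A M') :=
    (AdicCompletion.eval J M' (n+1)) ∘ₗ (s.restrictScalars A) ∘ₗ (AdicCompletion.of J M)
    with hσs
  have hσs_smul : ∀ u ∈ (I • ⊤ : Submodule A M), σs u = 0 := by
    intro u hu
    refine Submodule.smul_induction_on hu (fun a ha m _ => ?_) (fun x y hx hy => by
      rw [map_add, hx, hy, add_zero])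
    rw [map_smul]
    exact aux_kill I a ha _
  set sbar : M ⧸ (I • ⊤ : Submodule A M) →ₗ[A] M' ⧸ (I • ⊤ : Submodule A M') :=
    Submodule.liftQ _ σs (fun u hu => hσs_smul u hu) with hsbar
  have hsbar_mk : ∀ m : M, sbar (Submodule.Quotient.mk m) =
      AdicCompletion.eval J M' (n+1) (s (AdicCompletion.of J M m)) := fun m => rfl
  -- retraction at quotient level
  set σr : M' →ₗ[A] M'' ⧸ (I • ⊤ : Submodule A M'') :=
    (AdicCompletion.eval J M'' (n+1)) ∘ₗ (r.restrictScalars A) ∘ₗ (AdicCompletion.of J M')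
    with hσr
  have hσr_smul : ∀ u ∈ (I • ⊤ : Submodule A M'), σr u = 0 := by
    intro u hu
    refine Submodule.smul_induction_on hu (fun a ha m _ => ?_) (fun x y hx hy => by
      rw [map_add, hx, hy, add_zero])
    rw [map_smul]
    exact aux_kill I a ha _
  set rbar : M' ⧸ (I • ⊤ : Submodule A M') →ₗ[A] M'' ⧸ (I • ⊤ : Submodule A M'') :=
    Submodule.liftQ _ σr (fun u hu => hσr_smul u hu) with hrbar
  have hrbar_mk : ∀ m : M', rbar (Submodule.Quotient.mk m) =
      AdicCompletion.eval J M'' (n+1) (r (AdicCompletion.of J M' m)) := fun m => rfl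
  -- basic identities on quotient level
  have hfbar_mk : ∀ x : M'', fbar (Submodule.Quotient.mk x) = Submodule.Quotient.mk (f x) :=
    fun x => rfl
  have hgbar_mk : ∀ x : M', gbar (Submodule.Quotient.mk x) = Submodule.Quotient.mk (g x) :=
    fun x => rfl
  -- gbar ∘ sbar = id
  have hgs : ∀ u, gbar (sbar u) = u := by
    intro u
    obtain ⟨m, rfl⟩ := Submodule.Quotient.mk_surjective _ u
    rw [hsbar_mk]
    have : gbar (AdicCompletion.eval J M' (n+1) (s (AdicCompletion.of J M m)))
        = AdicCompletion.eval J M (n+1) (AdicCompletion.map J g (s (AdicCompletion.of J M m))) :=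
      (aux_eval_map J g (n+1) _).symm
    rw [this, hs', AdicCompletion.eval_of]
    rfl
  -- rbar ∘ fbar = id
  have hrfbar : ∀ u, rbar (fbar u) = u := by
    intro u
    obtain ⟨x, rfl⟩ := Submodule.Quotient.mk_surjective _ u
    rw [hfbar_mk, hrbar_mk]
    rw [← aux_map_of J f x]
    have : r (AdicCompletion.map J f (AdicCompletion.of J M'' x))
        = AdicCompletion.of J M'' x := hrf _
    rw [this, AdicCompletion.eval_of]
    rfl
  have hfbar_inj : Function.Injective fbar := by
    intro a b hab
    have := congrArg rbar hab
    rwa [hrfbar, hrfbar] at this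
  have hgbar_surj : Function.Surjective gbar := fun u => ⟨sbar u, hgs u⟩
  -- exactness on quotient level
  have hexbar : ∀ u, gbar u = 0 ↔ u ∈ Set.range fbar := by
    intro u
    constructor
    · intro hu
      obtain ⟨x, hx⟩ := Submodule.Quotient.mk_surjective _ u
      obtain ⟨w, hw⟩ := hp (AdicCompletion.of J M' x)
      refine ⟨AdicCompletion.eval J M'' (n+1) w, ?_⟩
      have h1 : fbar (AdicCompletion.eval J M'' (n+1) w)
          = AdicCompletion.eval J M' (n+1) (AdicCompletion.map J f w) := by
        rw [hfbar]; exact (aux_eval_map J f (n+1) w).symm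
      rw [h1, hw, hpval, map_sub, AdicCompletion.eval_of, aux_map_of J g]
      have h2 : AdicCompletion.eval J M' (n+1) (s (AdicCompletion.of J M (g x)))
          = sbar (Submodule.Quotient.mk (g x)) := rfl
      have h3 : (Submodule.Quotient.mk (g x) : M ⧸ (I • ⊤ : Submodule A M)) = gbar u := by
        rw [← hx]; rfl
      rw [h2, h3, hu, map_zero, sub_zero, ← hx]
      rfl
    · rintro ⟨x, rfl⟩
      obtain ⟨y, rfl⟩ := Submodule.Quotient.mk_surjective _ x
      rw [hfbar_mk, hgbar_mk]
      have h0 : AdicCompletion.map J g (AdicCompletion.map J f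
          (AdicCompletion.of J M'' y)) = 0 := hex.apply_apply_eq_zero _
      rw [aux_map_of J f, aux_map_of J g] at h0
      have := congrArg (AdicCompletion.eval J M (n+1)) h0
      rw [AdicCompletion.eval_of, map_zero] at this
      exact this
  -- transport to tensor products
  have hnatf : ∀ x, TensorProduct.quotTensorEquivQuotSMul M' I
      (LinearMap.baseChange (A ⧸ I) f x) = fbar (TensorProduct.quotTensorEquivQuotSMul M'' I x) :=
    fun x => aux_quotTensor_natural I f x
  have hnatg : ∀ x, TensorProduct.quotTensorEquivQuotSMul M I
      (LinearMap.baseChange (A ⧸ I) g x) = gbar (TensorProduct.quotTensorEquivQuotSMul M' I x) :=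
    fun x => aux_quotTensor_natural I g x
  refine ⟨?_, ?_, ?_, ?_⟩
  · -- injectivity
    intro a b hab
    apply (TensorProduct.quotTensorEquivQuotSMul M'' I).injective
    apply hfbar_inj
    rw [← hnatf, ← hnatf, hab]
  · -- exactness
    intro y
    constructor
    · intro hy
      have : gbar (TensorProduct.quotTensorEquivQuotSMul M' I y) = 0 := by
        rw [← hnatg, hy, map_zero]
      obtain ⟨v, hv⟩ := (hexbar _).mp this
      refine ⟨(TensorProduct.quotTensorEquivQuotSMul M'' I).symm v, ?_⟩
      apply (TensorProduct.quotTensorEquivQuotSMul M' I).injective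
      rw [hnatf, LinearEquiv.apply_symm_apply, hv]
    · rintro ⟨x, rfl⟩
      apply (TensorProduct.quotTensorEquivQuotSMul M I).injective
      rw [hnatg, hnatf, map_zero]
      exact (hexbar _).mpr ⟨_, rfl⟩
  · -- surjectivity
    intro y
    obtain ⟨v, hv⟩ := hgbar_surj (TensorProduct.quotTensorEquivQuotSMul M I y)
    refine ⟨(TensorProduct.quotTensorEquivQuotSMul M' I).symm v, ?_⟩
    apply (TensorProduct.quotTensorEquivQuotSMul M I).injective
    rw [hnatg, LinearEquiv.apply_symm_apply, hv]
  · -- the section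
    set σ : M →ₗ[A] (A ⧸ I) ⊗[A] M' :=
      ((TensorProduct.quotTensorEquivQuotSMul M' I).symm.toLinearMap) ∘ₗ sbar ∘ₗ
        (Submodule.mkQ (I • ⊤ : Submodule A M)) with hσ
    have hσval : ∀ m, LinearMap.baseChange (A ⧸ I) g (σ m) = (1 : A ⧸ I) ⊗ₜ[A] m := by
      intro m
      apply (TensorProduct.quotTensorEquivQuotSMul M I).injective
      rw [hnatg]
      have : TensorProduct.quotTensorEquivQuotSMul M' I (σ m) =
          sbar (Submodule.Quotient.mk m) := by
        rw [hσ]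
        simp only [LinearMap.comp_apply, LinearEquiv.coe_coe, LinearEquiv.apply_symm_apply]
        rfl
      rw [this, hgs]
      have h1 : ((1 : A ⧸ I) ⊗ₜ[A] m) =
          (TensorProduct.quotTensorEquivQuotSMul M I).symm (Submodule.Quotient.mk m) :=
        (TensorProduct.quotTensorEquivQuotSMul_symm_mk I m).symm
      rw [h1, LinearEquiv.apply_symm_apply]
    refine ⟨LinearMap.liftBaseChange (A ⧸ I) σ, ?_⟩
    apply LinearMap.ext
    intro x
    induction x using TensorProduct.induction_on with
    | zero => simp
    | tmul a m =>
      rw [LinearMap.comp_apply, LinearMap.liftBaseChange_tmul, map_smul, hσval,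
        LinearMap.id_apply, TensorProduct.smul_tmul', smul_eq_mul, mul_one]
    | add x y hx hy => simp only [map_add, hx, hy]
end

section
/- Let A be a ring with an ideal J, set A_n = A/J^{n+1}, and let 0 → M''⊗A_n → M'⊗A_n → M⊗A_n → 0 be a compatible system of split exact sequences of A_n-modules such that each M⊗A_n is a projective A_n-module. Then the induced sequence of J-adic completions 0 → M̂'' → M̂' → M̂ → 0 is split exact. -/
open TensorProduct LinearMap

namespace SplitAux

variable {A : Type*} [CommRing A] {X Y Z : Type*}
  [AddCommGroup X] [Module A X] [AddCommGroup Y] [Module A Y] [AddCommGroup Z] [Module A Z]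

/-- The transition map between quotients for nested ideals. -/
def trans (I₀ I₁ : Ideal A) (hle : I₁ ≤ I₀) :
    X ⧸ (I₁ • ⊤ : Submodule A X) →ₗ[A] X ⧸ (I₀ • ⊤ : Submodule A X) :=
  Submodule.mapQ _ _ LinearMap.id
    (fun x hx => Submodule.smul_mono_left hle hx)

@[simp] lemma trans_mk (I₀ I₁ : Ideal A) (hle : I₁ ≤ I₀) (x : X) :
    trans I₀ I₁ hle (Submodule.Quotient.mk (p := (I₁ • ⊤ : Submodule A X)) x) =
      Submodule.Quotient.mk (p := (I₀ • ⊤ : Submodule A X)) x := rfl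

lemma trans_surjective (I₀ I₁ : Ideal A) (hle : I₁ ≤ I₀) :
    Function.Surjective (trans (X := X) I₀ I₁ hle) := fun y =>
  Quotient.inductionOn' y fun x => ⟨Submodule.Quotient.mk x, rfl⟩

lemma trans_reduce (I₀ I₁ : Ideal A) (hle : I₁ ≤ I₀) (φ : X →ₗ[A] Y)
    (q : X ⧸ (I₁ • ⊤ : Submodule A X)) :
    trans I₀ I₁ hle (φ.reduceModIdeal I₁ q) = φ.reduceModIdeal I₀ (trans I₀ I₁ hle q) := by
  refine Quotient.inductionOn' q fun x => ?_
  rfl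

lemma sub0 (J : Ideal A) : Subsingleton (X ⧸ ((J ^ 0 : Ideal A) • ⊤ : Submodule A X)) := by
  rw [Submodule.Quotient.subsingleton_iff]
  simp [Ideal.one_eq_top]

lemma bridge0 (I : Ideal A) (φ : X →ₗ[A] Y) (t : TensorProduct A (A ⧸ I) X) :
    φ.reduceModIdeal I (TensorProduct.quotTensorEquivQuotSMul X I t) =
      TensorProduct.quotTensorEquivQuotSMul Y I (φ.baseChange (A ⧸ I) t) := by
  induction t with
  | zero => simp
  | tmul a x =>
      obtain ⟨a, rfl⟩ := Ideal.Quotient.mk_surjective a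
      simp [TensorProduct.quotTensorEquivQuotSMul_mk_tmul]
  | add u v hu hv => simp [hu, hv]

lemma bridge0' (I : Ideal A) (φ : X →ₗ[A] Y) (q : X ⧸ (I • ⊤ : Submodule A X)) :
    φ.reduceModIdeal I q = TensorProduct.quotTensorEquivQuotSMul Y I
      (φ.baseChange (A ⧸ I) ((TensorProduct.quotTensorEquivQuotSMul X I).symm q)) := by
  rw [← bridge0]
  simp

lemma reduce_inj (I : Ideal A) (φ : X →ₗ[A] Y)
    (h : Function.Injective (φ.baseChange (A ⧸ I))) :
    Function.Injective (φ.reduceModIdeal I) := by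
  intro p q hpq
  rw [bridge0', bridge0'] at hpq
  have h1 := h ((TensorProduct.quotTensorEquivQuotSMul Y I).injective hpq)
  exact (TensorProduct.quotTensorEquivQuotSMul X I).symm.injective h1

lemma reduce_ex (I : Ideal A) (φ : X →ₗ[A] Y) (ψ : Y →ₗ[A] Z)
    (h : Function.Exact (φ.baseChange (A ⧸ I)) (ψ.baseChange (A ⧸ I))) :
    ∀ q, ψ.reduceModIdeal I q = 0 → ∃ p, φ.reduceModIdeal I p = q := by
  intro q h0
  rw [bridge0'] at h0
  have h1 : ψ.baseChange (A ⧸ I) ((TensorProduct.quotTensorEquivQuotSMul Y I).symm q) = 0 := by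
    apply (TensorProduct.quotTensorEquivQuotSMul Z I).injective
    rw [h0, map_zero]
  obtain ⟨u, hu⟩ := (h _).mp h1
  refine ⟨TensorProduct.quotTensorEquivQuotSMul X I u, ?_⟩
  rw [bridge0, hu]
  simp

lemma reduce_gf (I : Ideal A) (φ : X →ₗ[A] Y) (ψ : Y →ₗ[A] Z)
    (h : ∀ u, ψ.baseChange (A ⧸ I) (φ.baseChange (A ⧸ I) u) = 0) :
    ∀ x, ψ.reduceModIdeal I (φ.reduceModIdeal I x) = 0 := by
  intro x
  rw [bridge0' I φ x, bridge0, h]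
  simp

lemma transitionMap_eq_trans (J : Ideal A) {m n : ℕ} (h : m ≤ n)
    (q : X ⧸ ((J ^ n : Ideal A) • ⊤ : Submodule A X)) :
    AdicCompletion.transitionMap J X h q =
      trans (J ^ m) (J ^ n) (Ideal.pow_le_pow_right h) q :=
  Quotient.inductionOn' q fun _ => rfl

variable {M'' M' M : Type*} [AddCommGroup M''] [AddCommGroup M'] [AddCommGroup M]
  [Module A M''] [Module A M'] [Module A M]

set_option maxHeartbeats 1000000 in
lemma step (I₀ I₁ : Ideal A) (hle : I₁ ≤ I₀) (f : M'' →ₗ[A] M') (g : M' →ₗ[A] M)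
    (hproj : Module.Projective (A ⧸ I₁) (TensorProduct A (A ⧸ I₁) M))
    (hsplit : ∃ s : TensorProduct A (A ⧸ I₁) M →ₗ[A ⧸ I₁] TensorProduct A (A ⧸ I₁) M',
      (LinearMap.baseChange (A ⧸ I₁) g).comp s = LinearMap.id)
    (hinjQ : Function.Injective (f.reduceModIdeal I₀))
    (hexQ : ∀ q, g.reduceModIdeal I₀ q = 0 → ∃ p, f.reduceModIdeal I₀ p = q)
    (hgf : ∀ x, g.reduceModIdeal I₁ (f.reduceModIdeal I₁ x) = 0)
    (σ : M ⧸ (I₀ • ⊤ : Submodule A M) →ₗ[A] M' ⧸ (I₀ • ⊤ : Submodule A M'))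
    (hσ : ∀ x, g.reduceModIdeal I₀ (σ x) = x) :
    ∃ τ : M ⧸ (I₁ • ⊤ : Submodule A M) →ₗ[A] M' ⧸ (I₁ • ⊤ : Submodule A M'),
      (∀ x, g.reduceModIdeal I₁ (τ x) = x) ∧
      ∀ x, trans I₀ I₁ hle (τ x) = σ (trans I₀ I₁ hle x) := by
  classical
  obtain ⟨s, hs⟩ := hsplit
  -- the A-linear section at level I₁
  let eM := TensorProduct.quotTensorEquivQuotSMul M I₁
  let eM' := TensorProduct.quotTensorEquivQuotSMul M' I₁
  let t : M ⧸ (I₁ • ⊤ : Submodule A M) →ₗ[A] M' ⧸ (I₁ • ⊤ : Submodule A M') :=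
    eM'.toLinearMap ∘ₗ (s.restrictScalars A) ∘ₗ eM.symm.toLinearMap
  have bridge : ∀ (φ : M' →ₗ[A] M) (u : TensorProduct A (A ⧸ I₁) M'),
      φ.reduceModIdeal I₁ (TensorProduct.quotTensorEquivQuotSMul M' I₁ u) =
        TensorProduct.quotTensorEquivQuotSMul M I₁ (φ.baseChange (A ⧸ I₁) u) := by
    intro φ u
    induction u with
    | zero => simp
    | tmul a x =>
        obtain ⟨a, rfl⟩ := Ideal.Quotient.mk_surjective a
        simp [TensorProduct.quotTensorEquivQuotSMul_mk_tmul]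
    | add u v hu hv => simp [hu, hv]
  have ht : ∀ x, g.reduceModIdeal I₁ (t x) = x := by
    intro x
    show g.reduceModIdeal I₁ (eM' (s (eM.symm x))) = x
    rw [bridge g (s (eM.symm x))]
    have h2 := LinearMap.congr_fun hs (eM.symm x)
    simp only [LinearMap.comp_apply, LinearMap.id_apply] at h2
    rw [h2]
    simp [eM]
  -- the defect map d
  let d : M ⧸ (I₁ • ⊤ : Submodule A M) →ₗ[A] M' ⧸ (I₀ • ⊤ : Submodule A M') :=
    σ ∘ₗ trans I₀ I₁ hle - (trans I₀ I₁ hle : _ →ₗ[A] _) ∘ₗ t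
  have hd : ∀ x, g.reduceModIdeal I₀ (d x) = 0 := by
    intro x
    have : d x = σ (trans I₀ I₁ hle x) - trans I₀ I₁ hle (t x) := rfl
    rw [this, map_sub, hσ, ← trans_reduce, ht, sub_self]
  -- the A-linear version of `f.reduceModIdeal I₀`
  let fA : M'' ⧸ (I₀ • ⊤ : Submodule A M'') →ₗ[A] M' ⧸ (I₀ • ⊤ : Submodule A M') :=
    { toFun := f.reduceModIdeal I₀,
      map_add' := map_add _,
      map_smul' := fun a x => (f.reduceModIdeal I₀).map_smul (Ideal.Quotient.mk I₀ a) x }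
  have hfA : ∀ x, fA x = f.reduceModIdeal I₀ x := fun _ => rfl
  have hfAinj : Function.Injective fA := hinjQ
  -- invert f on the image of d
  let efA := LinearEquiv.ofInjective fA hfAinj
  let dcod : M ⧸ (I₁ • ⊤ : Submodule A M) →ₗ[A] LinearMap.range fA :=
    d.codRestrict (LinearMap.range fA) (fun x => by
      obtain ⟨p, hp⟩ := hexQ (d x) (hd x)
      exact ⟨p, hp⟩)
  let d' : M ⧸ (I₁ • ⊤ : Submodule A M) →ₗ[A] M'' ⧸ (I₀ • ⊤ : Submodule A M'') :=
    efA.symm.toLinearMap ∘ₗ dcod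
  have hd' : ∀ x, fA (d' x) = d x := by
    intro x
    have : fA (efA.symm (dcod x)) = (efA (efA.symm (dcod x)) : M' ⧸ (I₀ • ⊤ : Submodule A M')) :=
      rfl
    rw [show d' x = efA.symm (dcod x) from rfl, this, efA.apply_symm_apply]
    rfl
  -- module structures over A ⧸ I₁
  have tor : Module.IsTorsionBySet A (M'' ⧸ (I₀ • ⊤ : Submodule A M'')) (I₁ : Set A) :=
    (Module.isTorsionBySet_quotient_iff _ _).mpr fun x r hr =>
      Submodule.smul_mem_smul (hle hr) Submodule.mem_top
  letI mod1 : Module (A ⧸ I₁) (M'' ⧸ (I₀ • ⊤ : Submodule A M'')) := tor.module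
  -- upgrade trans and d' to (A ⧸ I₁)-linear maps
  let transR : (M'' ⧸ (I₁ • ⊤ : Submodule A M'')) →ₗ[A ⧸ I₁]
      (M'' ⧸ (I₀ • ⊤ : Submodule A M'')) :=
    { toFun := trans I₀ I₁ hle,
      map_add' := map_add _,
      map_smul' := fun r x => Quotient.inductionOn' r fun a =>
        (trans (X := M'') I₀ I₁ hle).map_smul a x }
  let dR : (M ⧸ (I₁ • ⊤ : Submodule A M)) →ₗ[A ⧸ I₁] (M'' ⧸ (I₀ • ⊤ : Submodule A M'')) :=
    { toFun := d',
      map_add' := map_add _,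
      map_smul' := fun r x => Quotient.inductionOn' r fun a => d'.map_smul a x }
  have transRsurj : Function.Surjective transR := trans_surjective I₀ I₁ hle
  -- projectivity of the middle quotient
  letI : Module.Projective (A ⧸ I₁) (M ⧸ (I₁ • ⊤ : Submodule A M)) := by
    refine Module.Projective.of_equiv (R := A ⧸ I₁) (σ := RingHom.id _) (σ' := RingHom.id _)
      (M := TensorProduct A (A ⧸ I₁) M) ?_
    refine { eM with map_smul' := fun r u => ?_ }
    obtain ⟨a, rfl⟩ := Ideal.Quotient.mk_surjective r
    show eM (Ideal.Quotient.mk I₁ a • u) = Ideal.Quotient.mk I₁ a • eM u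
    rw [show (Ideal.Quotient.mk I₁ a : A ⧸ I₁) = algebraMap A (A ⧸ I₁) a from rfl,
      algebraMap_smul, map_smul]
    rfl
  obtain ⟨h, hh⟩ := Module.projective_lifting_property transR dR transRsurj
  have hh' : ∀ x, trans I₀ I₁ hle (h x) = d' x := fun x => LinearMap.congr_fun hh x
  -- downgrade h to A-linear
  let hA : M ⧸ (I₁ • ⊤ : Submodule A M) →ₗ[A] M'' ⧸ (I₁ • ⊤ : Submodule A M'') :=
    { toFun := h,
      map_add' := map_add _,
      map_smul' := fun a x => h.map_smul (Ideal.Quotient.mk I₁ a) x }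
  -- the A-linear version of `f.reduceModIdeal I₁`
  let fA1 : M'' ⧸ (I₁ • ⊤ : Submodule A M'') →ₗ[A] M' ⧸ (I₁ • ⊤ : Submodule A M') :=
    { toFun := f.reduceModIdeal I₁,
      map_add' := map_add _,
      map_smul' := fun a x => (f.reduceModIdeal I₁).map_smul (Ideal.Quotient.mk I₁ a) x }
  refine ⟨t + fA1 ∘ₗ hA, fun x => ?_, fun x => ?_⟩
  · have : (t + fA1 ∘ₗ hA) x = t x + f.reduceModIdeal I₁ (hA x) := rfl
    rw [this, map_add, ht, hgf, add_zero]
  · have h1 : (t + fA1 ∘ₗ hA) x = t x + f.reduceModIdeal I₁ (hA x) := rfl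
    rw [h1, map_add, trans_reduce, show trans (X := M'') I₀ I₁ hle (hA x) = d' x from hh' x,
      show f.reduceModIdeal I₀ (d' x) = d x from hd' x,
      show d x = σ (trans I₀ I₁ hle x) - trans I₀ I₁ hle (t x) from rfl]
    abel

end SplitAux

open SplitAux

/-- Let `A` be a ring with an ideal `J`, set `A_n = A/J^(n+1)`, and suppose that for every `n`
the base-changed sequence `0 → M''⊗A_n → M'⊗A_n → M⊗A_n → 0` is split exact and `M⊗A_n` is a
projective `A_n`-module. Then the induced sequence of `J`-adic completions
`0 → M̂'' → M̂' → M̂ → 0` is split exact. -/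
theorem split_exact_completion_of_split_exact_mod_ideal (A : Type*) [CommRing A] (J : Ideal A)
    (M'' M' M : Type*) [AddCommGroup M''] [AddCommGroup M'] [AddCommGroup M]
    [Module A M''] [Module A M'] [Module A M] (f : M'' →ₗ[A] M') (g : M' →ₗ[A] M)
    (hproj : ∀ n : ℕ, Module.Projective (A ⧸ J ^ (n + 1))
      (TensorProduct A (A ⧸ J ^ (n + 1)) M))
    (hinj : ∀ n : ℕ, Function.Injective (LinearMap.baseChange (A ⧸ J ^ (n + 1)) f))
    (hex : ∀ n : ℕ, Function.Exact (LinearMap.baseChange (A ⧸ J ^ (n + 1)) f)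
      (LinearMap.baseChange (A ⧸ J ^ (n + 1)) g))
    (hsurj : ∀ n : ℕ, Function.Surjective (LinearMap.baseChange (A ⧸ J ^ (n + 1)) g))
    (hsplit : ∀ n : ℕ, ∃ s : TensorProduct A (A ⧸ J ^ (n + 1)) M →ₗ[A ⧸ J ^ (n + 1)]
        TensorProduct A (A ⧸ J ^ (n + 1)) M',
      (LinearMap.baseChange (A ⧸ J ^ (n + 1)) g).comp s = LinearMap.id) :
    Function.Injective (AdicCompletion.map J f) ∧
    Function.Exact (AdicCompletion.map J f) (AdicCompletion.map J g) ∧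
    Function.Surjective (AdicCompletion.map J g) ∧
    ∃ s : AdicCompletion J M →ₗ[AdicCompletion J A] AdicCompletion J M',
      (AdicCompletion.map J g).comp s = LinearMap.id := by
  classical
  haveI s0'' := sub0 (X := M'') J
  haveI s0' := sub0 (X := M') J
  haveI s0 := sub0 (X := M) J
  -- quotient-level facts at every level
  have hinjQ : ∀ n, Function.Injective (f.reduceModIdeal (J ^ n)) := by
    intro n
    match n with
    | 0 => exact fun a b _ => Subsingleton.elim a b
    | (n + 1) => exact reduce_inj _ f (hinj n)
  have hexQ : ∀ n q, g.reduceModIdeal (J ^ n) q = 0 → ∃ p, f.reduceModIdeal (J ^ n) p = q := by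
    intro n
    match n with
    | 0 => exact fun q _ => ⟨0, Subsingleton.elim _ _⟩
    | (n + 1) => exact reduce_ex _ f g (hex n)
  have hgfQ : ∀ n x, g.reduceModIdeal (J ^ n) (f.reduceModIdeal (J ^ n) x) = 0 := by
    intro n
    match n with
    | 0 => exact fun x => Subsingleton.elim _ _
    | (n + 1) =>
        refine reduce_gf _ f g (fun u => ?_)
        exact (hex n).apply_apply_eq_zero u
  -- recursive construction of compatible sections
  have step' : ∀ (n : ℕ)
      (σ : M ⧸ ((J ^ n : Ideal A) • ⊤ : Submodule A M) →ₗ[A]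
        M' ⧸ ((J ^ n : Ideal A) • ⊤ : Submodule A M'))
      (hσ : ∀ x, g.reduceModIdeal (J ^ n) (σ x) = x),
      ∃ τ : M ⧸ ((J ^ (n + 1) : Ideal A) • ⊤ : Submodule A M) →ₗ[A]
          M' ⧸ ((J ^ (n + 1) : Ideal A) • ⊤ : Submodule A M'),
        (∀ x, g.reduceModIdeal (J ^ (n + 1)) (τ x) = x) ∧
        ∀ x, trans (J ^ n) (J ^ (n + 1)) (Ideal.pow_le_pow_right (Nat.le_succ n)) (τ x) =
          σ (trans (J ^ n) (J ^ (n + 1)) (Ideal.pow_le_pow_right (Nat.le_succ n)) x) :=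
    fun n σ hσ => step (J ^ n) (J ^ (n + 1)) (Ideal.pow_le_pow_right (Nat.le_succ n)) f g
      (hproj n) (hsplit n) (hinjQ n) (hexQ n) (hgfQ (n + 1)) σ hσ
  let F : ∀ n : ℕ, {σ : M ⧸ ((J ^ n : Ideal A) • ⊤ : Submodule A M) →ₗ[A]
      M' ⧸ ((J ^ n : Ideal A) • ⊤ : Submodule A M') //
      ∀ x, g.reduceModIdeal (J ^ n) (σ x) = x} := fun n =>
    Nat.rec ⟨0, fun x => Subsingleton.elim _ _⟩
      (fun n p => ⟨(step' n p.1 p.2).choose, (step' n p.1 p.2).choose_spec.1⟩) n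
  have Fsucc : ∀ (n : ℕ) x,
      trans (J ^ n) (J ^ (n + 1)) (Ideal.pow_le_pow_right (Nat.le_succ n)) ((F (n + 1)).1 x) =
        (F n).1 (trans (J ^ n) (J ^ (n + 1)) (Ideal.pow_le_pow_right (Nat.le_succ n)) x) :=
    fun n => (step' n (F n).1 (F n).2).choose_spec.2
  have compat : ∀ {m n : ℕ} (h : m ≤ n) x,
      AdicCompletion.transitionMap J M' h ((F n).1 x) =
        (F m).1 (AdicCompletion.transitionMap J M h x) := by
    intro m n h
    induction n, h using Nat.le_induction with
    | base =>
        intro x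
        rw [show (Nat.le_refl m : m ≤ m) = le_refl m from rfl]
        simp
    | succ n hmn ih =>
        intro x
        have hc := LinearMap.congr_fun
          (show AdicCompletion.transitionMap J M' hmn ∘ₗ AdicCompletion.transitionMap J M' (Nat.le_succ n) = AdicCompletion.transitionMap J M' (hmn.trans (Nat.le_succ n)) from LinearMap.ext fun q => Quotient.inductionOn' q fun _ => rfl) ((F (n + 1)).1 x)
        have hc2 := LinearMap.congr_fun
          (show AdicCompletion.transitionMap J M hmn ∘ₗ AdicCompletion.transitionMap J M (Nat.le_succ n) = AdicCompletion.transitionMap J M (hmn.trans (Nat.le_succ n)) from LinearMap.ext fun q => Quotient.inductionOn' q fun _ => rfl) x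
        rw [LinearMap.comp_apply] at hc hc2
        rw [← hc, ← hc2, transitionMap_eq_trans J (Nat.le_succ n), Fsucc n x, ih,
          transitionMap_eq_trans J (Nat.le_succ n)]
  -- the section on completions
  have key : ∀ (n : ℕ) (c : A ⧸ ((J ^ n : Ideal A) • ⊤ : Ideal A))
      (w : M ⧸ ((J ^ n : Ideal A) • ⊤ : Submodule A M)),
      (F n).1 (c • w) = c • (F n).1 w := by
    intro n c w
    obtain ⟨a, rfl⟩ := Ideal.Quotient.mk_surjective c
    show (F n).1 (a • w) = a • (F n).1 w
    rw [map_smul]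
  let S : AdicCompletion J M →ₗ[AdicCompletion J A] AdicCompletion J M' :=
    { toFun := fun x => ⟨fun n => (F n).1 (x.val n), fun {m n} hmn => by
        rw [compat hmn, x.property hmn]⟩,
      map_add' := fun x y => by
        ext n
        exact map_add _ _ _,
      map_smul' := fun r x => by
        ext n
        exact key n (r.val n) (x.val n) }
  have hsec : ∀ y, (AdicCompletion.map J g) (S y) = y := by
    intro y
    ext n
    rw [AdicCompletion.map_val_apply]
    exact (F n).2 (y.val n)
  refine ⟨?_, ?_, fun y => ⟨S y, hsec y⟩, S, LinearMap.ext hsec⟩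
  · intro x y hxy
    ext n
    refine hinjQ n ?_
    have := congrArg (fun z => AdicCompletion.eval J M' n z) hxy
    simpa [AdicCompletion.eval_apply, AdicCompletion.map_val_apply] using this
  · intro y
    constructor
    · intro h0
      have hyn : ∀ n, ∃ p, f.reduceModIdeal (J ^ n) p = y.val n := by
        intro n
        refine hexQ n _ ?_
        have := congrArg (fun z => AdicCompletion.eval J M n z) h0
        simpa [AdicCompletion.eval_apply, AdicCompletion.map_val_apply] using this
      choose w hw using hyn
      have hcomp : ∀ {m n : ℕ} (hmn : m ≤ n),
          AdicCompletion.transitionMap J M'' hmn (w n) = w m := by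
        intro m n hmn
        refine hinjQ m ?_
        have hnat := LinearMap.congr_fun
          (AdicCompletion.transitionMap_comp_reduceModIdeal J f hmn) (w n)
        rw [LinearMap.comp_apply] at hnat
        have : (f.reduceModIdeal (J ^ m) : _ →ₗ[A] _)
            (AdicCompletion.transitionMap J M'' hmn (w n)) =
            AdicCompletion.transitionMap J M' hmn (f.reduceModIdeal (J ^ n) (w n)) :=
          hnat.symm
        rw [hw m]
        refine Eq.trans this ?_
        rw [hw n]
        exact y.property hmn
      refine ⟨⟨w, fun {m n} hmn => hcomp hmn⟩, ?_⟩
      ext n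
      show f.reduceModIdeal (J ^ n) (w n) = y.val n
      exact hw n
    · rintro ⟨x, rfl⟩
      ext n
      rw [AdicCompletion.map_val_apply, AdicCompletion.map_val_apply]
      exact hgfQ n (x.val n)
end
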